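/- arXiv:1701.07198 — 10 statements merged into one kernel-verified Lean document; each statement's English description precedes it below -/
import Mathlib

section
/- For coprime positive integers a and b, the rational Catalan number Cat(a,b) = (1/(a+b)) * binomial(a+b, a) is a positive integer. -/
/-- For coprime positive integers `a` and `b`, the rational Catalan number
`Cat(a,b) = (1/(a+b)) * binomial(a+b, a)` is a positive integer. -/
theorem rational_catalan_pos_integer (a b : ℕ) (ha : 0 < a) (hb : 0 < b)
    (hab : Nat.Coprime a b) :
    ∃ c : ℕ, 0 < c ∧ (a + b) * c = Nat.choose (a + b) a := by
  have hco : Nat.Coprime (a + b) a := by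
    rw [Nat.add_comm]
    exact Nat.coprime_add_self_left.mpr hab.symm
  have key : (a + b) * Nat.choose (a + b - 1) (a - 1)
      = Nat.choose (a + b) a * a := by
    have h := Nat.add_one_mul_choose_eq (a + b - 1) (a - 1)
    have h1 : a + b - 1 + 1 = a + b := by omega
    have h2 : a - 1 + 1 = a := by omega
    simpa [Nat.succ_eq_add_one, h1, h2] using h
  have hdvd : (a + b) ∣ Nat.choose (a + b) a :=
    hco.dvd_of_dvd_mul_right ⟨_, key.symm⟩
  obtain ⟨c, hc⟩ := hdvd
  refine ⟨c, ?_, hc.symm⟩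
  have hpos : 0 < Nat.choose (a + b) a := Nat.choose_pos (by omega)
  rcases Nat.eq_zero_or_pos c with h | h
  · rw [h, Nat.mul_zero] at hc; omega
  · exact h
end

section
/- The number of lattice paths from (0,0) to (b,a) using unit north and east steps that stay strictly above the line y = (a/b)x (except at the endpoints) equals (1/(a+b)) * binomial(a+b, a), for coprime positive integers a and b. -/
/-- A step sequence (`true` = north, `false` = east) of length `a + b`. The prefix
of length `k` has `northCount f k` north steps. -/
def northCount {n : ℕ} (f : Fin n → Bool) (k : ℕ) : ℕ :=
  (Finset.univ.filter (fun i : Fin n => (i : ℕ) < k ∧ f i = true)).card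

/-- `f` encodes an `(a,b)`-Dyck path: it has `a` north steps (and hence `b` east
steps), and every prefix with `e` east steps and `n` north steps satisfies
`n * b ≥ e * a`, i.e. the path stays weakly above the line `y = (a/b) x`
(by coprimality it touches the line only at the endpoints). -/
def IsDyckPath (a b : ℕ) (f : Fin (a + b) → Bool) : Prop :=
  northCount f (a + b) = a ∧
    ∀ k ≤ a + b, northCount f k * b ≥ (k - northCount f k) * a

open Finset

namespace DyckAux

variable {n : ℕ}

/-- periodic extension of `f` to `ℕ`. -/
def ext (f : Fin n → Bool) (i : ℕ) : Bool :=
  if h : i % n < n then f ⟨i % n, h⟩ else false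

def cnt (f : Fin n → Bool) (k : ℕ) : ℕ :=
  ((range k).filter (fun i => ext f i = true)).card

def H (a b : ℕ) (f : Fin n → Bool) (k : ℕ) : ℤ :=
  ∑ i ∈ range k, (if ext f i then (b : ℤ) else -(a : ℤ))

def rot (s : ℕ) (f : Fin n → Bool) : Fin n → Bool :=
  fun i => ext f (i + s)

lemma ext_congr (f : Fin n → Bool) {i j : ℕ} (h : i % n = j % n) :
    ext f i = ext f j := by
  simp only [ext, h]

lemma ext_lt (f : Fin n → Bool) {i : ℕ} (h : i < n) :
    ext f i = f ⟨i, h⟩ := by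
  have h' : i % n = i := Nat.mod_eq_of_lt h
  simp only [ext]
  rw [dif_pos (lt_of_le_of_lt (Nat.mod_le i n) h)]
  congr 1
  exact Fin.ext h'

lemma ext_rot (f : Fin n → Bool) (s i : ℕ) :
    ext (rot s f) i = ext f (i + s) := by
  rcases Nat.eq_zero_or_pos n with rfl | hn
  · simp [ext]
  · have h1 : i % n < n := Nat.mod_lt _ hn
    simp only [ext, dif_pos h1]
    show ext f ((⟨i % n, h1⟩ : Fin n) + s) = _
    exact ext_congr f ((Nat.mod_modEq i n).add_right s)


lemma H_succ (a b : ℕ) (f : Fin n → Bool) (k : ℕ) :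
    H a b f (k + 1) = H a b f k + (if ext f k then (b : ℤ) else -(a : ℤ)) :=
  Finset.sum_range_succ _ _

lemma cnt_succ (f : Fin n → Bool) (k : ℕ) :
    cnt f (k + 1) = cnt f k + (if ext f k then 1 else 0) := by
  unfold cnt
  rw [Finset.range_add_one, Finset.filter_insert]
  split
  · rw [Finset.card_insert_of_notMem (by simp)]
  · simp

lemma cnt_le (f : Fin n → Bool) (k : ℕ) : cnt f k ≤ k :=
  le_trans (Finset.card_filter_le _ _) (by simp)

lemma H_eq (a b : ℕ) (f : Fin n → Bool) (k : ℕ) :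
    H a b f k = (cnt f k : ℤ) * b - ((k : ℤ) - cnt f k) * a := by
  induction k with
  | zero => simp [H, cnt]
  | succ k ih =>
    rw [H_succ, cnt_succ, ih]
    split <;> push_cast <;> ring

lemma H_shift (a b : ℕ) (f : Fin n → Bool) (s k : ℕ) :
    H a b (rot s f) k = H a b f (s + k) - H a b f s := by
  induction k with
  | zero => simp [H]
  | succ k ih =>
    rw [H_succ, ih, ← Nat.add_assoc, H_succ, ext_rot, Nat.add_comm k s]
    ring

lemma rot_congr (f : Fin n → Bool) {s t : ℕ} (h : s % n = t % n) :
    rot s f = rot t f := by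
  funext i
  exact ext_congr f ((Nat.ModEq.add_left _ h) : (↑i + s) % n = (↑i + t) % n)

lemma rot_rot (f : Fin n → Bool) (s t : ℕ) :
    rot s (rot t f) = rot (s + t) f := by
  funext i
  show ext (rot t f) (↑i + s) = ext f (↑i + (s + t))
  rw [ext_rot, Nat.add_assoc]

lemma rot_zero (f : Fin n → Bool) : rot 0 f = f := by
  funext i
  show ext f (↑i + 0) = f i
  rw [Nat.add_zero, ext_lt f i.isLt]

lemma rot_n (f : Fin n → Bool) : rot n f = f := by
  rw [rot_congr f (show n % n = 0 % n by simp), rot_zero]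

lemma H_per (a b : ℕ) (f : Fin n → Bool) (h0 : H a b f n = 0) (k : ℕ) :
    H a b f (n + k) = H a b f k := by
  have := H_shift a b f n k
  rw [rot_n, h0, sub_zero] at this
  exact this.symm


lemma key {a b : ℕ} (ha : 0 < a) (hb : 0 < b) (hab : Nat.Coprime a b)
    {c e : ℕ} (h : c * b = e * a) : ∃ p, c = a * p ∧ e = b * p := by
  obtain ⟨p, hp⟩ : a ∣ c := hab.dvd_of_dvd_mul_right ⟨e, by linarith⟩
  obtain ⟨q, hq⟩ : b ∣ e := (hab.symm).dvd_of_dvd_mul_right ⟨c, by linarith⟩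
  refine ⟨p, hp, ?_⟩
  subst hp hq
  have : p = q := by
    have h2 : p * (a * b) = q * (a * b) := by ring_nf; ring_nf at h; linarith
    exact Nat.eq_of_mul_eq_mul_right (Nat.mul_pos ha hb) h2
  rw [this]

/-- if a window of length `< a+b` has balance zero, it is empty. -/
lemma no_zero {a b : ℕ} (ha : 0 < a) (hb : 0 < b) (hab : Nat.Coprime a b)
    {c d : ℕ} (hcd : c ≤ d) (hd : d < a + b)
    (h : (c : ℤ) * b - ((d : ℤ) - c) * a = 0) : d = 0 := by
  have h' : c * b = (d - c) * a := by
    have : (c : ℤ) * b = ((d - c : ℕ) : ℤ) * a := by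
      rw [Nat.cast_sub hcd]; linarith
    exact_mod_cast this
  obtain ⟨p, hp1, hp2⟩ := key ha hb hab h'
  rcases Nat.eq_zero_or_pos p with rfl | hp
  · omega
  · have h1 : a * 1 ≤ a * p := Nat.mul_le_mul_left a hp
    have h2 : b * 1 ≤ b * p := Nat.mul_le_mul_left b hp
    omega

/-- a full window of length `a+b` with balance zero has exactly `a` norths. -/
lemma full_window {a b : ℕ} (ha : 0 < a) (hb : 0 < b) (hab : Nat.Coprime a b)
    {c : ℕ} (hc : c ≤ a + b)
    (h : (c : ℤ) * b - (((a + b : ℕ) : ℤ) - c) * a = 0) : c = a := by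
  have h' : c * b = (a + b - c) * a := by
    have : (c : ℤ) * b = ((a + b - c : ℕ) : ℤ) * a := by
      rw [Nat.cast_sub hc]; push_cast; push_cast at h; linarith
    exact_mod_cast this
  obtain ⟨p, hp1, hp2⟩ := key ha hb hab h'
  rcases Nat.lt_or_ge p 2 with h2 | h2
  · interval_cases p <;> omega
  · have ha2 : a * 2 ≤ a * p := Nat.mul_le_mul_left a h2
    have hb2 : b * 2 ≤ b * p := Nat.mul_le_mul_left b h2
    omega


lemma northCount_eq_cnt (f : Fin n → Bool) {k : ℕ} (hk : k ≤ n) :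
    northCount f k = cnt f k := by
  unfold northCount cnt
  refine Finset.card_bij (fun i _ => (i : ℕ)) ?_ ?_ ?_
  · intro i hi
    simp only [Finset.mem_filter, Finset.mem_univ, true_and] at hi
    simp only [Finset.mem_filter, Finset.mem_range]
    exact ⟨hi.1, by rw [ext_lt f i.isLt]; exact hi.2⟩
  · intro i _ j _ h
    exact Fin.ext h
  · intro j hj
    simp only [Finset.mem_filter, Finset.mem_range] at hj
    refine ⟨⟨j, lt_of_lt_of_le hj.1 hk⟩, ?_, rfl⟩
    simp only [Finset.mem_filter, Finset.mem_univ, true_and]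
    exact ⟨hj.1, by rw [← ext_lt f (lt_of_lt_of_le hj.1 hk)]; exact hj.2⟩

lemma isDyck_iff (a b : ℕ) (f : Fin (a + b) → Bool) :
    IsDyckPath a b f ↔ cnt f (a + b) = a ∧ ∀ k ≤ a + b, 0 ≤ H a b f k := by
  unfold IsDyckPath
  rw [northCount_eq_cnt f (le_refl _)]
  refine and_congr Iff.rfl (forall₂_congr fun k hk => ?_)
  rw [northCount_eq_cnt f hk, H_eq, sub_nonneg, ge_iff_le]
  constructor
  · intro h
    calc ((k : ℤ) - cnt f k) * a = ((k - cnt f k : ℕ) : ℤ) * a := by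
          rw [Nat.cast_sub (cnt_le f k)]
      _ ≤ (cnt f k : ℤ) * b := by exact_mod_cast h
  · intro h
    have : ((k - cnt f k : ℕ) : ℤ) * a ≤ (cnt f k : ℤ) * b := by
      rw [Nat.cast_sub (cnt_le f k)]; exact h
    exact_mod_cast this


section Main

variable {a b : ℕ}

lemma H_zero (f : Fin (a + b) → Bool) (hf : cnt f (a + b) = a) :
    H a b f (a + b) = 0 := by
  rw [H_eq, hf]; push_cast; ring

lemma distinct (ha : 0 < a) (hb : 0 < b) (hab : Nat.Coprime a b)
    (f : Fin (a + b) → Bool) {j k : ℕ} (hjk : j < k) (hk : k < j + (a + b)) :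
    H a b f j ≠ H a b f k := by
  intro h
  have hs := H_shift a b f j (k - j)
  rw [Nat.add_sub_cancel' (le_of_lt hjk), ← h, sub_self] at hs
  rw [H_eq] at hs
  have hd : k - j = 0 :=
    no_zero ha hb hab (cnt_le _ _) (by omega) (by linarith [hs])
  omega

lemma cnt_rot (ha : 0 < a) (hb : 0 < b) (hab : Nat.Coprime a b)
    (f : Fin (a + b) → Bool) (hf : cnt f (a + b) = a) (s : ℕ) :
    cnt (rot s f) (a + b) = a := by
  have h0 : H a b (rot s f) (a + b) = 0 := by
    rw [H_shift, Nat.add_comm s (a + b), H_per a b f (H_zero f hf), sub_self]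
  rw [H_eq] at h0
  exact full_window ha hb hab (cnt_le _ _) h0

lemma min_of_dyck (f : Fin (a + b) → Bool) (hf : cnt f (a + b) = a)
    {s : ℕ} (hs : s < a + b)
    (hD : ∀ k ≤ a + b, 0 ≤ H a b (rot s f) k) :
    ∀ u < a + b, H a b f s ≤ H a b f u := by
  have per := H_per a b f (H_zero f hf)
  intro u hu
  rcases le_or_gt s u with h | h
  · have h1 := hD (u - s) (by omega)
    rw [H_shift, Nat.add_sub_cancel' h, sub_nonneg] at h1
    exact h1
  · have h1 := hD (u + (a + b) - s) (by omega)
    rw [H_shift, show s + (u + (a + b) - s) = (a + b) + u by omega, per,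
      sub_nonneg] at h1
    exact h1

lemma unique_rot (ha : 0 < a) (hb : 0 < b) (hab : Nat.Coprime a b)
    (f : Fin (a + b) → Bool) (hf : cnt f (a + b) = a)
    {s t : ℕ} (hs : s < a + b) (ht : t < a + b)
    (hDs : ∀ k ≤ a + b, 0 ≤ H a b (rot s f) k)
    (hDt : ∀ k ≤ a + b, 0 ≤ H a b (rot t f) k) : s = t := by
  have m1 := min_of_dyck f hf hs hDs t ht
  have m2 := min_of_dyck f hf ht hDt s hs
  rcases lt_trichotomy s t with h | h | h
  · exact absurd (le_antisymm m1 m2)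
      (distinct ha hb hab f h (by omega))
  · exact h
  · exact absurd (le_antisymm m2 m1) (distinct ha hb hab f h (by omega))

lemma exists_rot (ha : 0 < a) (hb : 0 < b) (hab : Nat.Coprime a b)
    (f : Fin (a + b) → Bool) (hf : cnt f (a + b) = a) :
    ∃ s < a + b, IsDyckPath a b (rot s f) := by
  obtain ⟨s, hs, hmin⟩ := Finset.exists_min_image (range (a + b)) (H a b f)
    ⟨0, Finset.mem_range.2 (by omega)⟩
  rw [Finset.mem_range] at hs
  have per := H_per a b f (H_zero f hf)
  refine ⟨s, hs, (isDyck_iff a b _).2 ⟨cnt_rot ha hb hab f hf s, ?_⟩⟩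
  intro k hk
  rw [H_shift, sub_nonneg]
  rcases lt_or_ge (s + k) (a + b) with h | h
  · exact hmin _ (Finset.mem_range.2 h)
  · rw [show s + k = (a + b) + (s + k - (a + b)) by omega, per]
    exact hmin _ (Finset.mem_range.2 (by omega))

lemma sub_mod_inj {m j j' : ℕ} (hj : j < m) (hj' : j' < m)
    (h : (m - j) % m = (m - j') % m) : j = j' := by
  rcases Nat.eq_zero_or_pos j with rfl | h1 <;>
    rcases Nat.eq_zero_or_pos j' with rfl | h2
  · rfl
  · rw [Nat.sub_zero, Nat.mod_self, Nat.mod_eq_of_lt (by omega)] at h; omega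
  · rw [Nat.mod_eq_of_lt (by omega), Nat.sub_zero, Nat.mod_self] at h; omega
  · rw [Nat.mod_eq_of_lt (by omega), Nat.mod_eq_of_lt (by omega)] at h; omega

lemma rot_unrot {m j : ℕ} (hj : j < m) {f : Fin m → Bool} (g : Fin m → Bool)
    (h : f = rot j g) : rot ((m - j) % m) f = g := by
  rw [h, rot_rot, rot_congr g (show ((m - j) % m + j) % m = 0 % m by
    rw [Nat.mod_add_mod, Nat.sub_add_cancel (le_of_lt hj), Nat.mod_self,
      Nat.zero_mod]), rot_zero]

end Main

lemma northCount_top (f : Fin n → Bool) :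
    northCount f n = (Finset.univ.filter (fun i => f i = true)).card := by
  unfold northCount
  congr 1
  apply Finset.filter_congr
  intro i _
  simp [i.isLt]

lemma card_seq (n a : ℕ) :
    Nat.card {f : Fin n → Bool // northCount f n = a} = Nat.choose n a := by
  have e : {f : Fin n → Bool // northCount f n = a} ≃
      {s : Finset (Fin n) // s.card = a} :=
    { toFun := fun f => ⟨Finset.univ.filter (fun i => f.1 i = true),
        by rw [← northCount_top]; exact f.2⟩
      invFun := fun s => ⟨fun i => decide (i ∈ s.1),
        by rw [northCount_top]; simpa using s.2⟩
      left_inv := fun f => by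
        ext i
        simp
      right_inv := fun s => by
        ext i
        simp }
  rw [Nat.card_congr e, Nat.card_eq_fintype_card, Fintype.card_finset_len,
    Fintype.card_fin]

end DyckAux


theorem card_dyck_paths' (a b : ℕ) (ha : 0 < a) (hb : 0 < b) (hab : Nat.Coprime a b) :
    Set.ncard {f : Fin (a + b) → Bool | IsDyckPath a b f} * (a + b) =
      Nat.choose (a + b) a := by
  classical
  open DyckAux in
  have hn : 0 < a + b := by omega
  set φ : {f : Fin (a + b) → Bool // IsDyckPath a b f} × Fin (a + b) →
      {f : Fin (a + b) → Bool // northCount f (a + b) = a} :=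
    fun p => ⟨rot (p.2 : ℕ) p.1.1, by
      have hg := ((isDyck_iff a b p.1.1).1 p.1.2).1
      rw [northCount_eq_cnt _ le_rfl]
      exact cnt_rot ha hb hab _ hg _⟩ with hφ
  have hbij : Function.Bijective φ := by
    constructor
    · rintro ⟨⟨g, hg⟩, j⟩ ⟨⟨g', hg'⟩, j'⟩ h
      have h2 : rot (j : ℕ) g = rot (j' : ℕ) g' := congrArg Subtype.val h
      obtain ⟨hgc, hgH⟩ := (isDyck_iff a b g).1 hg
      obtain ⟨hgc', hgH'⟩ := (isDyck_iff a b g').1 hg'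
      set f := rot (j : ℕ) g with hf
      have hfc : cnt f (a + b) = a := cnt_rot ha hb hab g hgc _
      have e1 : rot ((a + b - j) % (a + b)) f = g := rot_unrot j.isLt g rfl
      have e2 : rot ((a + b - j') % (a + b)) f = g' := rot_unrot j'.isLt g' h2
      have hst : (a + b - (j : ℕ)) % (a + b) = (a + b - (j' : ℕ)) % (a + b) :=
        unique_rot ha hb hab f hfc (Nat.mod_lt _ hn) (Nat.mod_lt _ hn)
          (by rw [e1]; exact hgH) (by rw [e2]; exact hgH')
      have hj : (j : ℕ) = (j' : ℕ) := sub_mod_inj j.isLt j'.isLt hst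
      have hgg : g = g' := by rw [← e1, ← e2, hst]
      simp only [Prod.mk.injEq, Subtype.mk.injEq]
      exact ⟨hgg, Fin.ext hj⟩
    · rintro ⟨f, hf⟩
      have hfc : cnt f (a + b) = a := by rwa [← northCount_eq_cnt _ le_rfl]
      obtain ⟨s, hs, hD⟩ := exists_rot ha hb hab f hfc
      refine ⟨⟨⟨rot s f, hD⟩, ⟨(a + b - s) % (a + b), Nat.mod_lt _ hn⟩⟩, ?_⟩
      apply Subtype.ext
      exact rot_unrot hs f rfl
  have hcard : Nat.card ({f : Fin (a + b) → Bool // IsDyckPath a b f} × Fin (a + b)) =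
      Nat.card {f : Fin (a + b) → Bool // northCount f (a + b) = a} :=
    Nat.card_eq_of_bijective φ hbij
  rw [Nat.card_prod, Nat.card_eq_fintype_card (α := Fin (a + b)), Fintype.card_fin,
    card_seq] at hcard
  have hset : Set.ncard {f : Fin (a + b) → Bool | IsDyckPath a b f} =
      Nat.card {f : Fin (a + b) → Bool // IsDyckPath a b f} :=
    (Nat.card_coe_set_eq _).symm
  rw [hset]
  exact hcard

/-- The number of lattice paths from `(0,0)` to `(b,a)` with unit north and east
steps staying above the line `y = (a/b)x` equals `(1/(a+b)) * binomial (a+b) a`,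
for coprime positive integers `a` and `b`. -/
theorem card_dyck_paths (a b : ℕ) (ha : 0 < a) (hb : 0 < b) (hab : Nat.Coprime a b) :
    Set.ncard {f : Fin (a + b) → Bool | IsDyckPath a b f} * (a + b) =
      Nat.choose (a + b) a :=
  card_dyck_paths' a b ha hb hab
end

section
/- If a and b are coprime positive integers, then for every sequence (s_1, ..., s_b) of nonnegative integers summing to a, there is exactly one cyclic rotation (s_{k+1}, ..., s_b, s_1, ..., s_k) such that the lattice path N^{s_1}E N^{s_2}E ... N^{s_b}E built from the rotated sequence stays weakly above the line y = (a/b)x. -/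
/-!
Extend `s` periodically and let `h m` be `b` times the signed height of the resulting infinite
path above the line `y = (a / b) x` after `m` east steps. One period raises the path by `a`
while moving `b` steps east, so `h` is `b`-periodic; and `h m = h m'` forces
`a m ≡ a m' (mod b)`, so by coprimality `h` takes distinct values on distinct residues.
The rotation starting at `k` stays above the line exactly when `h k < h (k + j)` for
`0 < j < b`, i.e. when `k` is the strict minimum of `h` over a period, which exists and is
unique.
-/

open Finset Function

theorem Function.Periodic.sum_range_shift {M : Type*} [AddCancelCommMonoid M] {f : ℕ → M}
    {b : ℕ} (hf : Periodic f b) (m : ℕ) :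
    ∑ i ∈ range b, f (m + i) = ∑ i ∈ range b, f i := by
  induction m with
  | zero => simp
  | succ m ih =>
    rw [← ih, ← add_left_inj (f m)]
    calc ∑ i ∈ range b, f (m + 1 + i) + f m
        = ∑ i ∈ range (b + 1), f (m + i) := by
          rw [sum_range_succ', add_zero]; simp only [add_assoc, add_comm 1]
      _ = ∑ i ∈ range b, f (m + i) + f m := by rw [sum_range_succ, hf]

theorem Function.Periodic.existsUnique_forall_lt_add {α : Type*} [LinearOrder α] {g : ℕ → α}
    {b : ℕ} (hb : 0 < b) (hg : Periodic g b) (hinj : ∀ m m', g m = g m' → m ≡ m' [MOD b]) :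
    ∃! k : Fin b, ∀ j, 1 ≤ j → j ≤ b - 1 → g k < g (k + j) := by
  obtain ⟨k₀, hk₀, hmin⟩ := exists_min_image (range b) g ⟨0, mem_range.2 hb⟩
  have hle (m : ℕ) : g k₀ ≤ g m := hg.map_mod_nat m ▸ hmin _ (mem_range.2 (Nat.mod_lt _ hb))
  have reach (k k' : Fin b) (hne : k ≠ k') : ∃ j, 1 ≤ j ∧ j ≤ b - 1 ∧ g (k + j) = g k' := by
    rcases lt_or_gt_of_ne (Fin.val_ne_of_ne hne) with h | h
    · exact ⟨k' - k, by omega, by omega, by rw [Nat.add_sub_cancel' h.le]⟩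
    · refine ⟨k' + b - k, by omega, by omega, ?_⟩
      rw [Nat.add_sub_cancel' (by omega), hg]
  refine ⟨⟨k₀, mem_range.1 hk₀⟩, fun j hj₁ hj₂ => (hle _).lt_of_ne fun heq => ?_, ?_⟩
  · have hdvd : b ∣ j := by simpa using (Nat.modEq_iff_dvd' (Nat.le_add_right k₀ j)).1 (hinj _ _ heq)
    exact absurd (Nat.le_of_dvd hj₁ hdvd) (by omega)
  · intro k hk
    by_contra hne
    obtain ⟨j, hj₁, hj₂, hj⟩ := reach k _ hne
    exact (hk j hj₁ hj₂).not_ge (hj ▸ hle k)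

/-- `b` times the signed height, above the line `y = (a / b) x`, of the lattice path
`N^{f 0} E N^{f 1} E ⋯` after `m` east steps. -/
def heightAbove (a b : ℕ) (f : ℕ → ℕ) (m : ℕ) : ℤ :=
  b * ∑ i ∈ range m, f i - a * m

theorem heightAbove_add (a b : ℕ) (f : ℕ → ℕ) (m j : ℕ) :
    heightAbove a b f (m + j) =
      heightAbove a b f m + (b * ∑ i ∈ range j, f (m + i) - a * j : ℤ) := by
  simp only [heightAbove, sum_range_add f m j]
  push_cast
  ring

theorem lt_heightAbove_add_iff (a b : ℕ) (f : ℕ → ℕ) (m j : ℕ) :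
    a * j < b * ∑ i ∈ range j, f (m + i) ↔ heightAbove a b f m < heightAbove a b f (m + j) := by
  rw [heightAbove_add, lt_add_iff_pos_right, sub_pos]
  exact_mod_cast Iff.rfl

theorem heightAbove_periodic {a b : ℕ} {f : ℕ → ℕ} (hf : Periodic f b)
    (hsum : ∑ i ∈ range b, f i = a) : Periodic (heightAbove a b f) b := fun m => by
  rw [heightAbove_add, hf.sum_range_shift, hsum]
  ring

theorem modEq_of_heightAbove_eq {a b : ℕ} (hab : a.Coprime b) (f : ℕ → ℕ) {m m' : ℕ}
    (h : heightAbove a b f m = heightAbove a b f m') : m ≡ m' [MOD b] := by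
  have hnat : a * m + b * ∑ i ∈ range m', f i = a * m' + b * ∑ i ∈ range m, f i := by
    simp only [heightAbove] at h
    push_cast at h
    zify
    linarith
  refine Nat.ModEq.cancel_left_of_coprime (c := a) (Nat.coprime_comm.1 hab) ?_
  calc a * m ≡ a * m + b * ∑ i ∈ range m', f i [MOD b] := (Nat.add_mul_mod_self_left _ _ _).symm
    _ = a * m' + b * ∑ i ∈ range m, f i := hnat
    _ ≡ a * m' [MOD b] := Nat.add_mul_mod_self_left _ _ _

theorem periodic_fin_mod {M : Type*} {b : ℕ} (hb : 0 < b) (s : Fin b → M) :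
    Periodic (fun i => s ⟨i % b, Nat.mod_lt _ hb⟩) b := fun i => by
  simp only [Nat.add_mod_right]

theorem sum_range_fin_mod {M : Type*} [AddCommMonoid M] {b : ℕ} (hb : 0 < b) (s : Fin b → M) :
    ∑ i ∈ range b, s ⟨i % b, Nat.mod_lt _ hb⟩ = ∑ i, s i := by
  rw [← Fin.sum_univ_eq_sum_range (fun i => s ⟨i % b, Nat.mod_lt _ hb⟩)]
  exact sum_congr rfl fun i _ => congrArg s (Fin.ext (Nat.mod_eq_of_lt i.isLt))

theorem cycle_lemma_general (a b : ℕ) (hb : 0 < b) (hab : Nat.Coprime a b)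
    (s : Fin b → ℕ) (hs : ∑ i, s i = a) :
    ∃! k : Fin b, ∀ j : ℕ, 1 ≤ j → j ≤ b - 1 →
      b * (∑ i ∈ Finset.range j, s ⟨((k : ℕ) + i) % b, Nat.mod_lt _ hb⟩) > a * j := by
  set f : ℕ → ℕ := fun i => s ⟨i % b, Nat.mod_lt _ hb⟩
  have hper : Periodic (heightAbove a b f) b :=
    heightAbove_periodic (periodic_fin_mod hb s) ((sum_range_fin_mod hb s).trans hs)
  refine (existsUnique_congr fun k => forall₂_congr fun j _ => ?_).1
    (hper.existsUnique_forall_lt_add hb fun _ _ => modEq_of_heightAbove_eq hab f)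
  exact imp_congr_right fun _ => (lt_heightAbove_add_iff a b f k j).symm

/-- The cycle lemma: for coprime positive integers `a` and `b` and any sequence
`s : Fin b → ℕ` of nonnegative integers summing to `a`, there is exactly one
cyclic rotation of `s` whose associated lattice path
`N^{s_{k+1}} E ⋯ N^{s_b} E N^{s_1} E ⋯ N^{s_k} E` stays weakly above the line
`y = (a/b)x`; by coprimality, the interior condition is the strict inequality
`b * (partial sum of the first j rotated entries) > a * j` for `1 ≤ j ≤ b - 1`. -/
theorem cycle_lemma (a b : ℕ) (ha : 0 < a) (hb : 0 < b) (hab : Nat.Coprime a b)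
    (s : Fin b → ℕ) (hs : ∑ i, s i = a) :
    ∃! k : Fin b, ∀ j : ℕ, 1 ≤ j → j ≤ b - 1 →
      b * (∑ i ∈ Finset.range j, s ⟨((k : ℕ) + i) % b, Nat.mod_lt _ hb⟩) > a * j :=
  cycle_lemma_general a b hb hab s hs
end

section
/- For a noncrossing partition P of [n], the number of blocks of P plus the number of blocks of its Kreweras complement krew(P) equals n+1. -/
/-- A relation on `Fin n` (a set partition via equivalence classes) is
noncrossing if whenever `a < b < c < d` with `a ~ c` and `b ~ d`, all four lie
in the same block. -/
def Noncrossing {n : ℕ} (r : Fin n → Fin n → Prop) : Prop :=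
  ∀ a b c d : Fin n, a < b → b < c → c < d → r a c → r b d → r a b

/-- The combined relation on the interleaved labels `1, 1', 2, 2', …, n, n'`. -/
def Combined {n : ℕ} (P Q : Fin n → Fin n → Prop) :
    Fin (2 * n) → Fin (2 * n) → Prop := fun x y =>
  ((x : ℕ) % 2 = 0 ∧ (y : ℕ) % 2 = 0 ∧
      P ⟨(x : ℕ) / 2, by omega⟩ ⟨(y : ℕ) / 2, by omega⟩) ∨
  ((x : ℕ) % 2 = 1 ∧ (y : ℕ) % 2 = 1 ∧
      Q ⟨(x : ℕ) / 2, by omega⟩ ⟨(y : ℕ) / 2, by omega⟩)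

/-- `Q` is the Kreweras complement of `P`. -/
def IsKrewOf {n : ℕ} (P Q : Fin n → Fin n → Prop) : Prop :=
  Equivalence Q ∧ Noncrossing (Combined P Q) ∧
    ∀ Q' : Fin n → Fin n → Prop, Equivalence Q' → Noncrossing (Combined P Q') →
      ∀ a b, Q' a b → Q a b

/-- The number of blocks (equivalence classes) of a partition. -/
noncomputable def numBlocks {n : ℕ} (r : Fin n → Fin n → Prop) : ℕ :=
  Set.ncard {s : Set (Fin n) | ∃ i, s = {j | r i j}}

namespace KrewAux

variable {n : ℕ}

/-- The explicit Kreweras complement relation: `i` and `j` lie in exactly the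
same arc-intervals `[a, b)` of `P`. -/
def Rrel (P : Fin n → Fin n → Prop) (i j : Fin n) : Prop :=
  ∀ a b : Fin n, P a b → ((a.1 ≤ i.1 ∧ i.1 < b.1) ↔ (a.1 ≤ j.1 ∧ j.1 < b.1))

theorem Rrel_equiv (P : Fin n → Fin n → Prop) : Equivalence (Rrel P) :=
  ⟨fun _ _ _ _ => Iff.rfl,
   fun h a b hab => (h a b hab).symm,
   fun h1 h2 a b hab => (h1 a b hab).trans (h2 a b hab)⟩

theorem Rrel_nc (P : Fin n → Fin n → Prop) : Noncrossing (Rrel P) := by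
  intro i j k l hij hjk hkl hik hjl a b hab
  have hik' := hik a b hab
  have hjl' := hjl a b hab
  have h1 : i.1 < j.1 := hij
  have h2 : j.1 < k.1 := hjk
  have h3 : k.1 < l.1 := hkl
  constructor
  · rintro ⟨hai, hib⟩
    have hk := hik'.mp ⟨hai, hib⟩
    exact ⟨by omega, by omega⟩
  · rintro ⟨haj, hjb⟩
    have hl := hjl'.mp ⟨by omega, by omega⟩
    have hk := hik'.mpr ⟨by omega, by omega⟩
    exact ⟨by omega, by omega⟩

/-- even-even combined pair. -/
theorem combined_ee {P Q : Fin n → Fin n → Prop} {a b : Fin n} (h : P a b) :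
    Combined P Q ⟨2*a.1, by omega⟩ ⟨2*b.1, by omega⟩ := by
  left
  refine ⟨by simp only [Fin.val_mk]; omega, by simp only [Fin.val_mk]; omega, ?_⟩
  convert h using 2 <;> simp

/-- odd-odd combined pair. -/
theorem combined_oo {P Q : Fin n → Fin n → Prop} {a b : Fin n} (h : Q a b) :
    Combined P Q ⟨2*a.1+1, by omega⟩ ⟨2*b.1+1, by omega⟩ := by
  right
  refine ⟨by simp only [Fin.val_mk]; omega, by simp only [Fin.val_mk]; omega, ?_⟩
  convert h using 2 <;> simp <;> omega

theorem combined_eo_false {P Q : Fin n → Fin n → Prop} {a b : Fin n}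
    (h : Combined P Q ⟨2*a.1, by omega⟩ ⟨2*b.1+1, by omega⟩) : False := by
  rcases h with ⟨_, h1, _⟩ | ⟨h2, _, _⟩
  · exact absurd h1 (by simp only [Fin.val_mk]; omega)
  · exact absurd h2 (by simp only [Fin.val_mk]; omega)

theorem combined_oe_false {P Q : Fin n → Fin n → Prop} {a b : Fin n}
    (h : Combined P Q ⟨2*a.1+1, by omega⟩ ⟨2*b.1, by omega⟩) : False := by
  rcases h with ⟨h1, _, _⟩ | ⟨_, h2, _⟩
  · exact absurd h1 (by simp only [Fin.val_mk]; omega)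
  · exact absurd h2 (by simp only [Fin.val_mk]; omega)

theorem Rrel_combined_nc (P : Fin n → Fin n → Prop) (hPnc : Noncrossing P) :
    Noncrossing (Combined P (Rrel P)) := by
  intro x y z w hxy hyz hzw hxz hyw
  have hxy' : x.1 < y.1 := hxy
  have hyz' : y.1 < z.1 := hyz
  have hzw' : z.1 < w.1 := hzw
  rcases hxz with ⟨hx0, hz0, hPxz⟩ | ⟨hx1, hz1, hRxz⟩ <;>
    rcases hyw with ⟨hy0, hw0, hPyw⟩ | ⟨hy1, hw1, hRyw⟩
  · exact Or.inl ⟨hx0, hy0, hPnc _ _ _ _ (Fin.mk_lt_mk.mpr (by omega))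
      (Fin.mk_lt_mk.mpr (by omega)) (Fin.mk_lt_mk.mpr (by omega)) hPxz hPyw⟩
  · exfalso
    have h2 := hRyw _ _ hPxz
    simp only [Fin.val_mk] at h2
    have h3 := h2.mp ⟨by omega, by omega⟩
    omega
  · exfalso
    have h2 := hRxz _ _ hPyw
    simp only [Fin.val_mk] at h2
    have h3 := h2.mpr ⟨by omega, by omega⟩
    omega
  · exact Or.inr ⟨hx1, hy1, Rrel_nc P _ _ _ _ (Fin.mk_lt_mk.mpr (by omega))
      (Fin.mk_lt_mk.mpr (by omega)) (Fin.mk_lt_mk.mpr (by omega)) hRxz hRyw⟩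

theorem le_Rrel (P Q' : Fin n → Fin n → Prop) (hQ'e : Equivalence Q')
    (hnc : Noncrossing (Combined P Q')) : ∀ i j, Q' i j → Rrel P i j := by
  have key : ∀ i j : Fin n, i.1 < j.1 → Q' i j → Rrel P i j := by
    intro i j hij hQij a b hab
    rcases Nat.lt_or_ge a.1 b.1 with hab' | hab'
    · constructor
      · rintro ⟨hai, hib⟩
        refine ⟨by omega, ?_⟩
        by_contra hjb
        push_neg at hjb
        exact combined_eo_false (hnc ⟨2*a.1, by omega⟩ ⟨2*i.1+1, by omega⟩
          ⟨2*b.1, by omega⟩ ⟨2*j.1+1, by omega⟩ (Fin.mk_lt_mk.mpr (by omega))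
          (Fin.mk_lt_mk.mpr (by omega)) (Fin.mk_lt_mk.mpr (by omega))
          (combined_ee hab) (combined_oo hQij))
      · rintro ⟨haj, hjb⟩
        refine ⟨?_, by omega⟩
        by_contra hia
        push_neg at hia
        exact combined_oe_false (hnc ⟨2*i.1+1, by omega⟩ ⟨2*a.1, by omega⟩
          ⟨2*j.1+1, by omega⟩ ⟨2*b.1, by omega⟩ (Fin.mk_lt_mk.mpr (by omega))
          (Fin.mk_lt_mk.mpr (by omega)) (Fin.mk_lt_mk.mpr (by omega))
          (combined_oo hQij) (combined_ee hab))
    · constructor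
      · rintro ⟨h1, h2⟩; omega
      · rintro ⟨h1, h2⟩; omega
  intro i j hq
  rcases lt_trichotomy i.1 j.1 with h | h | h
  · exact key i j h hq
  · have : i = j := Fin.ext h
    subst this
    exact (Rrel_equiv P).refl i
  · exact (Rrel_equiv P).symm (key j i h (hQ'e.symm hq))

theorem numBlocks_eq_card_mins (r : Fin n → Fin n → Prop) (hr : Equivalence r) :
    numBlocks r = ({i : Fin n | ∀ j, r i j → i ≤ j}).ncard := by
  have key : {s : Set (Fin n) | ∃ i, s = {j | r i j}} =
      (fun i => {j | r i j}) '' {i | ∀ j, r i j → i ≤ j} := by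
    ext s
    constructor
    · rintro ⟨i, rfl⟩
      have hne : {j | r i j}.Nonempty := ⟨i, hr.refl i⟩
      obtain ⟨m, hmem, hmin⟩ := Set.exists_min_image {j | r i j} id (Set.toFinite _) hne
      refine ⟨m, fun j hmj => hmin j (hr.trans hmem hmj), ?_⟩
      ext k
      exact ⟨fun h => hr.trans hmem h, fun h => hr.trans (hr.symm hmem) h⟩
    · rintro ⟨i, _, rfl⟩
      exact ⟨i, rfl⟩
  rw [numBlocks, key, Set.ncard_image_of_injOn]
  intro i hi k hk he
  have hik : r i k := by
    have hk' : k ∈ (fun i => {j | r i j}) i := by rw [he]; exact hr.refl k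
    exact hk'
  exact le_antisymm (hi k hik) (hk i (hr.symm hik))

theorem numBlocks_eq_card_maxs (r : Fin n → Fin n → Prop) (hr : Equivalence r) :
    numBlocks r = ({i : Fin n | ∀ j, r i j → j ≤ i}).ncard := by
  have key : {s : Set (Fin n) | ∃ i, s = {j | r i j}} =
      (fun i => {j | r i j}) '' {i | ∀ j, r i j → j ≤ i} := by
    ext s
    constructor
    · rintro ⟨i, rfl⟩
      have hne : {j | r i j}.Nonempty := ⟨i, hr.refl i⟩
      obtain ⟨m, hmem, hmax⟩ := Set.exists_max_image {j | r i j} id (Set.toFinite _) hne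
      refine ⟨m, fun j hmj => hmax j (hr.trans hmem hmj), ?_⟩
      ext k
      exact ⟨fun h => hr.trans hmem h, fun h => hr.trans (hr.symm hmem) h⟩
    · rintro ⟨i, _, rfl⟩
      exact ⟨i, rfl⟩
  rw [numBlocks, key, Set.ncard_image_of_injOn]
  intro i hi k hk he
  have hik : r i k := by
    have hk' : k ∈ (fun i => {j | r i j}) i := by rw [he]; exact hr.refl k
    exact hk'
  exact le_antisymm (hk i (hr.symm hik)) (hi k hik)

end KrewAux

/-- For a noncrossing partition `P` of `[n]`, the number of blocks of `P` plus
the number of blocks of its Kreweras complement equals `n + 1`. -/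
theorem blocks_add_blocks_krew (n : ℕ) (hn : 0 < n)
    (P Q : Fin n → Fin n → Prop) (hP : Equivalence P) (hPnc : Noncrossing P)
    (hQ : IsKrewOf P Q) :
    numBlocks P + numBlocks Q = n + 1 := by
  classical
  set R := KrewAux.Rrel P with hRdef
  have hRe := KrewAux.Rrel_equiv P
  have hQR : ∀ i j, Q i j ↔ R i j := fun i j =>
    ⟨fun h => KrewAux.le_Rrel P Q hQ.1 hQ.2.1 i j h,
     fun h => hQ.2.2 R hRe (KrewAux.Rrel_combined_nc P hPnc) i j h⟩
  have hQRb : numBlocks Q = numBlocks R := by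
    unfold numBlocks
    congr 1
    ext s
    constructor
    · rintro ⟨i, rfl⟩
      exact ⟨i, Set.ext fun j => hQR i j⟩
    · rintro ⟨i, rfl⟩
      exact ⟨i, Set.ext fun j => (hQR i j).symm⟩
  set Maxs : Set (Fin n) := {i | ∀ j, P i j → j ≤ i} with hMaxs
  set NMax : Set (Fin n) := {i | ∃ j, P i j ∧ i < j} with hNMax
  set Rmins : Set (Fin n) := {i | ∀ j, R i j → i ≤ j} with hRmins
  set O : Set (Fin n) := {i | ∀ a b, P a b → ¬(a.1 ≤ i.1 ∧ i.1 < b.1)} with hO'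
  have hOne : O.Nonempty := by
    refine ⟨⟨n-1, by omega⟩, fun a b hab h => ?_⟩
    have hb := b.isLt
    simp only [Fin.val_mk] at h
    omega
  obtain ⟨m0, hm0O, hm0min⟩ := Set.exists_min_image O id (Set.toFinite _) hOne
  have claimC : Rmins = insert m0 NMax := by
    ext i
    simp only [hRmins, hNMax, Set.mem_insert_iff, Set.mem_setOf_eq]
    constructor
    · intro hi
      by_cases hN : ∃ j, P i j ∧ i < j
      · exact Or.inr hN
      push_neg at hN
      left
      by_cases hOmem : i ∈ O
      · have hRim : R i m0 := fun a b hab => iff_of_false (hOmem a b hab) (hm0O a b hab)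
        exact le_antisymm (hi m0 hRim) (hm0min i hOmem)
      · exfalso
        simp only [hO', Set.mem_setOf_eq] at hOmem
        push_neg at hOmem
        obtain ⟨a0, b0, hab0, ha0, hb0⟩ := hOmem
        have hTne : ({a : Fin n | ∃ b, P a b ∧ a.1 ≤ i.1 ∧ i.1 < b.1}).Nonempty :=
          ⟨a0, b0, hab0, ha0, hb0⟩
        obtain ⟨as, ⟨bs, habs, hasi, hibs⟩, hmax⟩ :=
          Set.exists_max_image _ id (Set.toFinite _) hTne
        have hRasi : R as i := by
          intro c d hcd
          constructor
          · rintro ⟨hca, had⟩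
            refine ⟨by omega, ?_⟩
            by_contra hid
            push_neg at hid
            have hPad : P as d := by
              rcases Nat.eq_or_lt_of_le hca with heq | hlt
              · have hceq : c = as := Fin.ext heq
                rw [← hceq]
                exact hcd
              · have h5 := hPnc c as d bs (show c.1 < as.1 from hlt)
                  (show as.1 < d.1 from had) (show d.1 < bs.1 by omega) hcd habs
                exact hP.trans (hP.symm h5) hcd
            have hdT : d ∈ {a : Fin n | ∃ b, P a b ∧ a.1 ≤ i.1 ∧ i.1 < b.1} :=
              ⟨bs, hP.trans (hP.symm hPad) habs, hid, hibs⟩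
            have hda : d.1 ≤ as.1 := hmax d hdT
            omega
          · rintro ⟨hci, hid⟩
            have hcT : c ∈ {a : Fin n | ∃ b, P a b ∧ a.1 ≤ i.1 ∧ i.1 < b.1} :=
              ⟨d, hcd, hci, hid⟩
            have h6 : c.1 ≤ as.1 := hmax c hcT
            exact ⟨h6, by omega⟩
        have h7 : i ≤ as := hi as (hRe.symm hRasi)
        have h8 : i = as := le_antisymm h7 hasi
        subst h8
        have h9 : bs ≤ i := hN bs habs
        have h10 : bs.1 ≤ i.1 := h9
        omega
    · rintro (rfl | ⟨k, hPk, hik⟩)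
      · intro j hRj
        have hjO : j ∈ O := fun a b hab h => hm0O a b hab ((hRj a b hab).mpr h)
        exact hm0min j hjO
      · intro j hRij
        exact ((hRij i k hPk).mp ⟨le_refl i.1, hik⟩).1
  have hm0N : m0 ∉ NMax := by
    rintro ⟨k, hPk, hik⟩
    exact hm0O m0 k hPk ⟨le_refl _, hik⟩
  have hc1 : numBlocks P = Maxs.ncard := KrewAux.numBlocks_eq_card_maxs P hP
  have hc2 : numBlocks R = Rmins.ncard := KrewAux.numBlocks_eq_card_mins R hRe
  have hc3 : Rmins.ncard = NMax.ncard + 1 := by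
    rw [claimC, Set.ncard_insert_of_notMem hm0N (Set.toFinite _)]
  have hc4 : NMax = Maxsᶜ := by
    ext i
    simp only [hNMax, hMaxs, Set.mem_compl_iff, Set.mem_setOf_eq]
    constructor
    · rintro ⟨k, hPk, hik⟩ h
      exact absurd (h k hPk) (not_le.mpr hik)
    · intro h
      push_neg at h
      exact h
  have hc5 : Maxs.ncard + NMax.ncard = n := by
    rw [hc4]
    have hcompl := Set.ncard_add_ncard_compl Maxs
    simpa using hcompl
  rw [hQRb, hc1, hc2, hc3]
  omega
end

section
/- For coprime positive integers a and b, the map w ↦ b^{dim V^w}, where V is the reflection representation of S_a and V^w is the fixed subspace of w, is the character of a genuine representation of S_a; equivalently, for every w with c cycles, b^{c-1} is the value at w of a nonnegative integer combination of irreducible characters. -/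
/-- The number of cycles of a permutation, counting fixed points as 1-cycles. -/
noncomputable def cycleCount {n : ℕ} (w : Equiv.Perm (Fin n)) : ℕ :=
  w.cycleType.card + Set.ncard (Function.fixedPoints ⇑w)

/-!
Let `S_a` act on the set `X` of functions `f : Fin a → ZMod b` with `∑ f = 0`, and take the
permutation representation on `X → ℂ`. Its character at `w` counts the `w`-invariant functions in
`X`. A function is `w`-invariant iff it is constant on the cycles of `w`, so there are `b ^ c`
invariant functions, where `c` is the number of cycles. Since `a` is a unit mod `b`, the constant
functions already take every value of `∑`, so the sum map on invariant functions is onto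
`ZMod b` and exactly `b ^ (c - 1)` of them have sum zero.
-/

open Equiv Function

universe u

theorem AddMonoidHom.card_ker_mul_card_of_surjective {M N : Type*} [AddGroup M] [AddGroup N]
    (f : M →+ N) (hf : Surjective f) : Nat.card f.ker * Nat.card N = Nat.card M := by
  rw [← f.ker.card_mul_index, AddSubgroup.index_ker, f.range_eq_top.mpr hf,
    AddSubgroup.card_top]

theorem Nat.eq_pow_pred_of_mul_eq_pow {n b c : ℕ} (hb : 0 < b) (h : n * b = b ^ c) :
    n = b ^ (c - 1) := by
  cases c with
  | zero => exact Nat.eq_one_of_mul_eq_one_right h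
  | succ c => exact Nat.eq_of_mul_eq_mul_right hb (h.trans (pow_succ b c))

theorem LinearMap.toMatrix'_funLeft {k X : Type*} [CommRing k] [Fintype X] [DecidableEq X]
    (e : Perm X) : LinearMap.toMatrix' (funLeft k k e) = e.permMatrix k := by
  ext i j
  simp [LinearMap.toMatrix'_apply, Pi.single_apply, toPEquiv_apply, eq_comm]

theorem LinearMap.trace_funLeft_perm {k X : Type*} [Field k] [Fintype X] [DecidableEq X]
    (e : Perm X) : trace k (X → k) (funLeft k k e) = (fixedPoints e).ncard := by
  rw [trace_eq_matrix_trace k (Pi.basisFun k X), toMatrix_eq_toMatrix', toMatrix'_funLeft,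
    Matrix.trace_permutation]

noncomputable def permRep (k G X : Type*) [CommSemiring k] [Group G] [MulAction G X] :
    Representation k G (X → k) where
  toFun g := LinearMap.funLeft k k (g⁻¹ • ·)
  map_one' := by ext; simp
  map_mul' g h := by ext; simp [mul_smul]

theorem permRep_character {k X : Type u} {G : Type*} [Field k] [Group G] [MulAction G X]
    [Finite X] (g : G) :
    (FDRep.of (permRep k G X)).character g = Nat.card (MulAction.fixedBy X g) := by
  classical
  have := Fintype.ofFinite X
  rw [Nat.card_coe_set_eq, ← MulAction.fixedBy_inv]
  exact LinearMap.trace_funLeft_perm (MulAction.toPerm g⁻¹)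

namespace Equiv.Perm

section Cycles

variable {α : Type*} (σ : Perm α)

theorem SameCycle.apply_eq_of_comp_eq [Finite α] {β : Type*} {f : α → β} (hf : f ∘ σ = f)
    {x y : α} (h : σ.SameCycle x y) : f x = f y := by
  obtain ⟨i, rfl⟩ := h.exists_nat_pow_eq
  exact (congrFun (iterate_invariant hf i) x).symm

def invariantFunEquiv [Finite α] (β : Type*) :
    {f : α → β // f ∘ σ = f} ≃ (Quotient (SameCycle.setoid σ) → β) where
  toFun f := Quotient.lift f.1 fun _ _ => SameCycle.apply_eq_of_comp_eq σ f.2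
  invFun g := ⟨fun x => g ⟦x⟧, funext fun x => congrArg g <| Quotient.sound <|
    sameCycle_apply_left.mpr (SameCycle.refl σ x)⟩
  left_inv _ := rfl
  right_inv _ := funext fun q => Quotient.inductionOn q fun _ => rfl

variable [Fintype α] [DecidableEq α]

noncomputable def sameCycleQuotientEquiv :
    Quotient (SameCycle.setoid σ) ≃ σ.cycleFactorsFinset ⊕ fixedPoints σ := by
  refine Equiv.ofBijective (Quotient.lift (fun x =>
    if hx : σ x = x then .inr ⟨x, hx⟩
    else .inl ⟨σ.cycleOf x, cycleOf_mem_cycleFactorsFinset_iff.mpr (mem_support.mpr hx)⟩) ?_)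
    ⟨?_, ?_⟩
  · intro x y (h : σ.SameCycle x y)
    by_cases hx : σ x = x
    · obtain rfl := h.eq_of_left hx
      rfl
    · have hy : σ y ≠ y := fun hy => hx (h.apply_eq_self_iff.mpr hy)
      simp [hx, hy, h.cycleOf_eq]
  · refine Quotient.ind₂ fun x y hxy => Quotient.sound ?_
    by_cases hx : σ x = x <;> by_cases hy : σ y = y <;>
      simp only [Quotient.lift_mk, hx, hy, dite_true, dite_false, reduceCtorEq, Sum.inl.injEq,
        Sum.inr.injEq, Subtype.mk.injEq] at hxy
    · obtain rfl : x = y := congrArg Subtype.val hxy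
      exact SameCycle.refl σ x
    · exact (sameCycle_iff_cycleOf_eq_of_mem_support (mem_support.mpr hx)
        (mem_support.mpr hy)).mpr hxy
  · rintro (⟨c, hc⟩ | ⟨x, hx⟩)
    · obtain ⟨x, hx⟩ := (mem_cycleFactorsFinset_iff.mp hc).1.nonempty_support
      have hxσ : σ x ≠ x := mem_support.mp (mem_cycleFactorsFinset_support_le hc hx)
      exact ⟨⟦x⟧, by simp [hxσ, cycle_is_cycleOf hx hc]⟩
    · exact ⟨⟦x⟧, by simp [hx.eq]⟩

theorem card_quotient_sameCycle :
    Nat.card (Quotient (SameCycle.setoid σ)) = σ.cycleType.card + (fixedPoints σ).ncard := by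
  rw [Nat.card_congr (sameCycleQuotientEquiv σ), Nat.card_sum, Nat.card_eq_finsetCard,
    Nat.card_coe_set_eq, cycleType_def, Multiset.card_map, Finset.card]

end Cycles

end Equiv.Perm

section ZeroSum

attribute [local instance] arrowAction

variable {α : Type*}

theorem Equiv.Perm.smul_eq_self_iff_comp_eq {β : Type*} {σ : Perm α} {f : α → β} :
    σ • f = f ↔ f ∘ σ = f := by
  change f ∘ σ.symm = f ↔ _
  rw [comp_symm_eq, eq_comm]

def Equiv.Perm.invariantFunctions (σ : Perm α) (M : Type*) [AddGroup M] :
    AddSubgroup (α → M) where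
  carrier := {f | f ∘ σ = f}
  add_mem' hf hg := by simp_all [Set.mem_ofPred_eq, Pi.add_comp]
  zero_mem' := rfl
  neg_mem' hf := by simp_all [Set.mem_ofPred_eq, Pi.neg_comp]

variable [Fintype α]

def zeroSumFunctions (α M : Type*) [Fintype α] [AddCommMonoid M] :
    SubMulAction (Perm α) (α → M) where
  carrier := {f | ∑ i, f i = 0}
  smul_mem' σ f hf := (Equiv.sum_comp σ⁻¹ f).trans hf

def fixedByZeroSumFunctionsEquiv (σ : Perm α) (M : Type*) [AddCommMonoid M] :
    MulAction.fixedBy (zeroSumFunctions α M) σ ≃ {f : α → M // f ∘ σ = f ∧ ∑ i, f i = 0} where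
  toFun f := ⟨f.1.1, Perm.smul_eq_self_iff_comp_eq.mp (congrArg Subtype.val f.2), f.1.2⟩
  invFun f := ⟨⟨f.1, f.2.2⟩, Subtype.ext (Perm.smul_eq_self_iff_comp_eq.mpr f.2.1)⟩
  left_inv _ := rfl
  right_inv _ := rfl

theorem Equiv.Perm.card_invariant_sum_eq_zero_mul {b : ℕ} [NeZero b] (σ : Perm α)
    (hα : (Fintype.card α).Coprime b) :
    Nat.card {f : α → ZMod b // f ∘ σ = f ∧ ∑ i, f i = 0} * b =
      Nat.card {f : α → ZMod b // f ∘ σ = f} := by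
  let sum : σ.invariantFunctions (ZMod b) →+ ZMod b :=
    { toFun f := ∑ i, f.1 i
      map_zero' := Finset.sum_const_zero
      map_add' _ _ := Finset.sum_add_distrib }
  have hsum : Surjective sum := fun t => by
    refine ⟨⟨fun _ => (ZMod.unitOfCoprime _ hα)⁻¹ * t, rfl⟩, ?_⟩
    change ∑ _i : α, _ = t
    rw [Finset.sum_const, Finset.card_univ, nsmul_eq_mul, ← ZMod.coe_unitOfCoprime _ hα,
      Units.mul_inv_cancel_left]
  change _ = Nat.card (σ.invariantFunctions (ZMod b))
  rw [← sum.card_ker_mul_card_of_surjective hsum, Nat.card_zmod]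
  congr 1
  exact Nat.card_congr
    { toFun f := ⟨⟨f.1, f.2.1⟩, f.2.2⟩
      invFun f := ⟨f.1.1, f.1.2, f.2⟩
      left_inv _ := rfl
      right_inv _ := rfl }

theorem card_fixedBy_zeroSumFunctions {b : ℕ} [NeZero b] (σ : Perm α)
    (hα : (Fintype.card α).Coprime b) :
    Nat.card (MulAction.fixedBy (zeroSumFunctions α (ZMod b)) σ) =
      b ^ (Nat.card (Quotient (Perm.SameCycle.setoid σ)) - 1) := by
  refine Nat.eq_pow_pred_of_mul_eq_pow (NeZero.pos b) ?_
  rw [Nat.card_congr (fixedByZeroSumFunctionsEquiv σ _), σ.card_invariant_sum_eq_zero_mul hα,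
    Nat.card_congr (σ.invariantFunEquiv _), Nat.card_fun, Nat.card_zmod]

theorem permRep_zeroSumFunctions_character {α : Type} [Fintype α] {b : ℕ} [NeZero b]
    (hα : (Fintype.card α).Coprime b) (σ : Perm α) :
    (FDRep.of (permRep ℂ (Perm α) (zeroSumFunctions α (ZMod b)))).character σ =
      (b : ℂ) ^ (Nat.card (Quotient (Perm.SameCycle.setoid σ)) - 1) := by
  rw [permRep_character, card_fixedBy_zeroSumFunctions σ hα, Nat.cast_pow]

end ZeroSum

theorem cycleCount_eq_card_quotient_sameCycle {n : ℕ} (w : Perm (Fin n)) :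
    cycleCount w = Nat.card (Quotient (Perm.SameCycle.setoid w)) :=
  (w.card_quotient_sameCycle).symm

theorem okada_character_general (a b : ℕ) (hb : 0 < b)
    (hab : Nat.Coprime a b) :
    ∃ V : FDRep ℂ (Equiv.Perm (Fin a)),
      ∀ w : Equiv.Perm (Fin a), V.character w = (b : ℂ) ^ (cycleCount w - 1) := by
  have : NeZero b := ⟨hb.ne'⟩
  have ha : (Fintype.card (Fin a)).Coprime b := by rwa [Fintype.card_fin]
  refine ⟨_, fun w => (permRep_zeroSumFunctions_character ha w).trans ?_⟩
  rw [cycleCount_eq_card_quotient_sameCycle]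

/-- Okada's theorem (the direction used in the paper): for coprime positive
integers `a` and `b`, the class function `w ↦ b^(dim V^w) = b^(c(w) - 1)` on
`S_a` (where `V` is the reflection representation and `c(w)` the number of
cycles of `w`) is the character of a genuine finite-dimensional representation
of `S_a`. -/
theorem okada_character (a b : ℕ) (ha : 0 < a) (hb : 0 < b)
    (hab : Nat.Coprime a b) :
    ∃ V : FDRep ℂ (Equiv.Perm (Fin a)),
      ∀ w : Equiv.Perm (Fin a), V.character w = (b : ℂ) ^ (cycleCount w - 1) :=
  okada_character_general a b hb hab
end

section
/- Let a, b be coprime positive integers. For w ∈ S_a with c cycles, the number of rational slope parking functions in Park_{a,b} fixed by the action of w (permuting positions) equals b^{c-1}. -/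
/-- `p` is a rational slope `(a,b)`-parking function: a sequence of positive
integers whose nondecreasing rearrangement `p'` satisfies
`a * (p'_i - 1) ≤ b * (i - 1)` (i.e. `p'_i ≤ (b/a)(i-1) + 1`). -/
def IsRatParking (a b : ℕ) (p : Fin a → ℕ) : Prop :=
  (∀ i, 1 ≤ p i) ∧ ∀ i : Fin a, a * (p (Tuple.sort p i) - 1) ≤ b * (i : ℕ)

/-!
Write a parking function as `p = g + 1` with `g` valued in `ZMod b`; the parking condition
becomes `a * v ≤ b * #{i | g i < v}` for all `v ≤ b`. Replacing `g` by `g - t` amounts to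
reading the `b`-periodic walk `m ↦ b * #{(i, u) | u < m, u ≡ g i} - a * m` from `t` on, so
`g - t` is parking exactly when the walk attains its minimum at `t`. As `a` and `b` are
coprime, the walk takes distinct values on a period, so exactly one of the `b` shifts of each
`g` is parking. Shifts commute with `w`, and the `w`-invariant functions `Fin a → ZMod b` are
the `b ^ c` functions on the cycles of `w`; hence `b ^ (c - 1)` of them are parking.
-/

open Finset Equiv Equiv.Perm Function

section SameCycle

variable {α : Type*}

theorem comp_eq_self_iff_le_ker [Finite α] {β : Type*} {w : Perm α} {g : α → β} :
    g ∘ w = g ↔ SameCycle.setoid w ≤ Setoid.ker g := by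
  refine ⟨fun h x y hxy => ?_, fun h => funext fun x => (h (SameCycle.rfl.apply_right)).symm⟩
  obtain ⟨n, rfl⟩ := hxy.exists_nat_pow_eq
  rw [Setoid.ker_def, coe_pow, ← comp_apply (f := g), iterate_invariant h]

theorem card_comp_eq_self [Finite α] (w : Perm α) (β : Type*) :
    Nat.card {g : α → β // g ∘ w = g} =
      Nat.card β ^ Nat.card (Quotient (SameCycle.setoid w)) := by
  rw [← Nat.card_fun, ← Nat.card_congr (Setoid.liftEquiv _)]
  exact Nat.card_congr (Equiv.subtypeEquivRight fun _ => comp_eq_self_iff_le_ker)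

variable [Fintype α] [DecidableEq α]

noncomputable def sameCycleClass (w : Perm α) (x : α) : fixedPoints w ⊕ w.cycleFactorsFinset :=
  if h : w x = x then .inl ⟨x, h⟩
  else .inr ⟨w.cycleOf x, cycleOf_mem_cycleFactorsFinset_iff.2 (mem_support.2 h)⟩

theorem sameCycleClass_eq_iff {w : Perm α} {x y : α} :
    sameCycleClass w x = sameCycleClass w y ↔ w.SameCycle x y := by
  unfold sameCycleClass
  by_cases hx : w x = x <;> by_cases hy : w y = y
  · simp only [dif_pos hx, dif_pos hy, Sum.inl.injEq]
    exact ⟨fun h => by cases h; exact .rfl, fun h => Subtype.ext (h.eq_of_left hx)⟩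
  · simp only [dif_pos hx, dif_neg hy, reduceCtorEq, false_iff]
    exact fun h => hy (h.apply_eq_self_iff.1 hx)
  · simp only [dif_neg hx, dif_pos hy, reduceCtorEq, false_iff]
    exact fun h => hx (h.apply_eq_self_iff.2 hy)
  · simp only [dif_neg hx, dif_neg hy, Sum.inr.injEq, Subtype.mk.injEq]
    refine ⟨fun h => ?_, SameCycle.cycleOf_eq⟩
    have hy' : y ∈ (w.cycleOf y).support := mem_support_cycleOf_iff.2 ⟨.rfl, mem_support.2 hy⟩
    exact (mem_support_cycleOf_iff.1 (h ▸ hy')).1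

theorem sameCycleClass_surjective (w : Perm α) : Surjective (sameCycleClass w) := by
  rintro (⟨x, hx⟩ | ⟨c, hc⟩)
  · exact ⟨x, dif_pos hx⟩
  · obtain ⟨x, hx⟩ := (mem_cycleFactorsFinset_iff.1 hc).1.nonempty_support
    have hwx : w x ≠ x := mem_support.1 (mem_cycleFactorsFinset_support_le hc hx)
    refine ⟨x, ?_⟩
    rw [sameCycleClass, dif_neg hwx]
    exact congrArg Sum.inr (Subtype.ext (cycle_is_cycleOf hx hc).symm)

theorem card_quotient_sameCycle (w : Perm α) :
    Nat.card (Quotient (SameCycle.setoid w)) = w.cycleType.card + (fixedPoints w).ncard := by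
  have hbij : Bijective (Quotient.lift (s := SameCycle.setoid w) (sameCycleClass w)
      fun _ _ => sameCycleClass_eq_iff.2) := by
    refine ⟨?_, fun z => ?_⟩
    · rintro ⟨x⟩ ⟨y⟩ h
      exact Quotient.sound (sameCycleClass_eq_iff.1 h)
    · obtain ⟨x, hx⟩ := sameCycleClass_surjective w z
      exact ⟨⟦x⟧, hx⟩
  rw [Nat.card_eq_of_bijective _ hbij, Nat.card_sum, Nat.card_coe_set_eq, add_comm,
    cycleType_def, Multiset.card_map, Nat.card_eq_fintype_card, Fintype.card_coe]
  rfl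

end SameCycle

theorem card_filter_comp_perm {α : Type*} [Fintype α] (σ : Perm α) (P : α → Prop)
    [DecidablePred P] :
    #{i | P (σ i)} = #{i | P i} :=
  card_equiv σ fun i => by simp

theorem Monotone.le_iff_lt_card_filter_le {n : ℕ} {β : Type*} [LinearOrder β] {q : Fin n → β}
    (hq : Monotone q) (j : Fin n) (v : β) : q j ≤ v ↔ (j : ℕ) < #{i | q i ≤ v} := by
  constructor
  · intro hjv
    have : Iic j ⊆ ({i | q i ≤ v} : Finset _) := fun i hi => by
      simpa using (hq (mem_Iic.1 hi)).trans hjv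
    simpa [Fin.card_Iic] using card_le_card this
  · intro hj
    by_contra! hvj
    have : ({i | q i ≤ v} : Finset _) ⊆ Iio j := fun i hi => by
      simp only [mem_filter, mem_univ, true_and] at hi
      exact mem_Iio.2 (lt_of_not_ge fun hji => absurd ((hq hji).trans hi) (not_le.2 hvj))
    simpa [Fin.card_Iio] using (card_le_card this).trans_lt' hj

section Parking

variable {a b : ℕ}

theorem isRatParking_iff_count (hb : 0 < b) (p : Fin a → ℕ) :
    IsRatParking a b p ↔ (∀ i, 1 ≤ p i) ∧ ∀ v ≤ b, a * v ≤ b * #{i | p i ≤ v} := by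
  refine and_congr_right fun hp => ?_
  have hcount (j : Fin a) (v : ℕ) :
      p (Tuple.sort p j) ≤ v ↔ (j : ℕ) < #{i | p i ≤ v} := by
    rw [← card_filter_comp_perm (Tuple.sort p)]
    exact (Tuple.monotone_sort p).le_iff_lt_card_filter_le j v
  constructor
  · intro h v hv
    by_contra! hlt
    have hN : #{i | p i ≤ v} < a :=
      Nat.lt_of_mul_lt_mul_left (hlt.trans_le (by rw [mul_comm b]; exact Nat.mul_le_mul_left a hv))
    set j : Fin a := ⟨_, hN⟩
    have hvq : v < p (Tuple.sort p j) := not_le.1 ((hcount j v).not.2 (lt_irrefl _))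
    have hj : a * (p (Tuple.sort p j) - 1) ≤ b * #{i | p i ≤ v} := h j
    have : a * v ≤ a * (p (Tuple.sort p j) - 1) := Nat.mul_le_mul_left a (by omega)
    omega
  · intro h j
    by_contra! hlt
    set q := p (Tuple.sort p j)
    -- Capped at `b` so that `h` applies; `b * j < a * v` survives the cap since `j < a`.
    set v := min (q - 1) b with hv
    have hvq : v < q := by have := hp (Tuple.sort p j); omega
    have hjv : b * j < a * v := by
      rcases min_cases (q - 1) b with ⟨hm, -⟩ | ⟨hm, -⟩ <;> rw [hv, hm]
      · exact hlt
      · nlinarith [j.2]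
    have hN : #{i | p i ≤ v} ≤ j := not_lt.1 ((hcount j v).not.1 (not_le.2 hvq))
    have := h v (min_le_right _ _)
    have := Nat.mul_le_mul_left b hN
    omega

-- `g` stands for `p - 1`, read modulo `b` so that cyclic shifts of the values are additions.
def IsZeroParking (a b : ℕ) (g : Fin a → ZMod b) : Prop :=
  ∀ v ≤ b, a * v ≤ b * #{i | (g i).val < v}

theorem isRatParking_val_add_one_iff [NeZero b] (g : Fin a → ZMod b) :
    IsRatParking a b (fun i => (g i).val + 1) ↔ IsZeroParking a b g := by
  simp only [isRatParking_iff_count (NeZero.pos b), le_add_iff_nonneg_left, zero_le,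
    implies_true, Nat.add_one_le_iff, true_and, IsZeroParking]

theorem IsRatParking.le (hb : 0 < b) {p : Fin a → ℕ} (hp : IsRatParking a b p)
    (i : Fin a) : p i ≤ b := by
  have h := ((isRatParking_iff_count hb p).1 hp).2 b le_rfl
  rw [mul_comm a] at h
  have hcard : #{i | p i ≤ b} = #(univ : Finset (Fin a)) :=
    le_antisymm (card_filter_le _ _) (by simpa using Nat.le_of_mul_le_mul_left h hb)
  exact card_filter_eq_iff.1 hcard i (mem_univ i)

theorem val_add_one_injective [NeZero b] :
    Injective fun (g : Fin a → ZMod b) i => (g i).val + 1 :=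
  fun _ _ h => funext fun i => ZMod.val_injective b (by simpa using congrFun h i)

theorem setOf_isRatParking_fixed_eq_image [NeZero b] (w : Perm (Fin a)) :
    {p | IsRatParking a b p ∧ p ∘ w = p} =
      (fun g i => (g i).val + 1) ''
        {g : Fin a → ZMod b | IsZeroParking a b g ∧ g ∘ w = g} := by
  ext p
  constructor
  · rintro ⟨hp, hpw⟩
    have hval : (fun i => ((p i - 1 : ℕ) : ZMod b).val + 1) = p := funext fun i => by
      have := hp.1 i
      have := hp.le (NeZero.pos b) i
      rw [ZMod.val_natCast, Nat.mod_eq_of_lt (by omega)]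
      omega
    refine ⟨fun i => ((p i - 1 : ℕ) : ZMod b), ⟨?_, ?_⟩, hval⟩
    · rwa [← isRatParking_val_add_one_iff, hval]
    · exact congrArg (fun q i => ((q i - 1 : ℕ) : ZMod b)) hpw
  · rintro ⟨g, ⟨hg, hgw⟩, rfl⟩
    exact ⟨(isRatParking_val_add_one_iff g).2 hg, congrArg (fun g i => (g i).val + 1) hgw⟩

end Parking

section CycleLemma

variable {a b : ℕ} [NeZero b] (g : Fin a → ZMod b)

def cumCount (m : ℕ) : ℕ :=
  ∑ u ∈ range m, #{i | g i = u}

theorem cumCount_add (t : ℕ) {v : ℕ} (hv : v ≤ b) :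
    cumCount g (t + v) = cumCount g t + #{i | (g i - t).val < v} := by
  rw [cumCount, sum_range_add, ← cumCount,
    card_eq_sum_card_fiberwise (f := fun i => (g i - t).val)
    (t := range v) fun i hi => by simpa using hi]
  refine congrArg _ (sum_congr rfl fun s hs => ?_)
  rw [filter_filter]
  refine congrArg card (filter_congr fun i _ => ?_)
  have hsv : s < v := mem_range.1 hs
  rw [Nat.cast_add, ← sub_eq_iff_eq_add']
  constructor
  · intro h
    rw [h, ZMod.val_natCast, Nat.mod_eq_of_lt (hsv.trans_le hv)]
    exact ⟨hsv, rfl⟩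
  · rintro ⟨-, h⟩
    rw [← h, ZMod.natCast_zmod_val]

theorem cumCount_add_period (m : ℕ) : cumCount g (m + b) = cumCount g m + a := by
  simp [cumCount_add g m le_rfl, ZMod.val_lt]

def excess (m : ℕ) : ℤ := b * cumCount g m - a * m

theorem excess_periodic : Periodic (excess g) b := fun m => by
  simp only [excess, cumCount_add_period]
  push_cast
  ring

theorem excess_add (t : ℕ) {v : ℕ} (hv : v ≤ b) :
    excess g (t + v) = excess g t + (b * #{i | (g i - t).val < v} - a * v) := by
  simp only [excess, cumCount_add g t hv]
  push_cast
  ring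

theorem isZeroParking_sub_iff (t : ZMod b) :
    IsZeroParking a b (fun i => g i - t) ↔ ∀ s : ZMod b, excess g t.val ≤ excess g s.val := by
  constructor
  · intro h s
    have hs : (t.val + (s - t).val) % b = s.val := by rw [← ZMod.val_add, add_sub_cancel]
    rw [← hs, (excess_periodic g).map_mod_nat, excess_add g t.val (ZMod.val_lt _).le,
      ZMod.natCast_zmod_val]
    have : (a * (s - t).val : ℤ) ≤ b * #{i | (g i - t).val < (s - t).val} := by
      exact_mod_cast h _ (ZMod.val_lt (s - t)).le
    linarith
  · intro h v hv
    have := h (t.val + v : ℕ)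
    rw [ZMod.val_natCast, (excess_periodic g).map_mod_nat, excess_add g t.val hv,
      ZMod.natCast_zmod_val] at this
    exact_mod_cast (by linarith : (a * v : ℤ) ≤ b * #{i | (g i - t).val < v})

theorem excess_val_injective (hab : a.Coprime b) :
    Injective fun s : ZMod b => excess g s.val := by
  intro s s' h
  -- Modulo `b` only `-a * s = -a * s'` survives, and `a` is a unit of `ZMod b`.
  have h' := congrArg (Int.cast : ℤ → ZMod b) h
  simp only [excess, Int.cast_sub, Int.cast_mul, Int.cast_natCast, ZMod.natCast_self, zero_mul,
    zero_sub, neg_inj, ZMod.natCast_zmod_val] at h'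
  exact ((ZMod.isUnit_iff_coprime a b).2 hab).mul_left_cancel h'

theorem existsUnique_isZeroParking_sub (hab : a.Coprime b) :
    ∃! t : ZMod b, IsZeroParking a b (fun i => g i - t) := by
  obtain ⟨t, ht⟩ := Finite.exists_min fun s : ZMod b => excess g s.val
  refine ⟨t, (isZeroParking_sub_iff g t).2 ht, fun t' ht' => ?_⟩
  exact excess_val_injective g hab (le_antisymm ((isZeroParking_sub_iff g t').1 ht' t) (ht t'))

end CycleLemma

theorem card_fixed_eq_card_fixed_isZeroParking_mul {a b : ℕ} [NeZero b] (hab : a.Coprime b)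
    (w : Perm (Fin a)) :
    Nat.card {g : Fin a → ZMod b // g ∘ w = g} =
      Nat.card {g : Fin a → ZMod b // IsZeroParking a b g ∧ g ∘ w = g} * b := by
  let shift (f : {g : Fin a → ZMod b // IsZeroParking a b g ∧ g ∘ w = g}) (t : ZMod b) :
      {g : Fin a → ZMod b // g ∘ w = g} :=
    ⟨fun i => f.1 i + t, congrArg (fun g i => g i + t) f.2.2⟩
  have hbij : Bijective fun x : _ × ZMod b => shift x.1 x.2 := by
    refine ⟨fun ⟨⟨f, hf, _⟩, t⟩ ⟨⟨f', hf', _⟩, t'⟩ heq => ?_, fun ⟨g, hgw⟩ => ?_⟩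
    · have h (i : Fin a) : f i + t = f' i + t' := congrFun (congrArg Subtype.val heq) i
      have hf₀ : IsZeroParking a b fun i => f i + t - t := by simpa using hf
      have hf₁ : IsZeroParking a b fun i => f i + t - t' := by simpa [h] using hf'
      obtain rfl := (existsUnique_isZeroParking_sub (fun i => f i + t) hab).unique hf₀ hf₁
      obtain rfl : f = f' := funext fun i => add_right_cancel (h i)
      rfl
    · obtain ⟨t, ht, -⟩ := existsUnique_isZeroParking_sub g hab
      refine ⟨(⟨fun i => g i - t, ht, congrArg (fun g i => g i - t) hgw⟩, t), ?_⟩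
      simp [shift]
  rw [← Nat.card_eq_of_bijective _ hbij, Nat.card_prod, Nat.card_zmod]

theorem cycleCount_pos {a : ℕ} (ha : 0 < a) (w : Perm (Fin a)) : 0 < cycleCount w := by
  have : Nonempty (Quotient (SameCycle.setoid w)) := ⟨⟦⟨0, ha⟩⟧⟩
  rw [cycleCount, ← card_quotient_sameCycle]
  exact Nat.card_pos

/-- For coprime positive `a, b` and `w ∈ S_a` with `c` cycles, the number of
rational slope parking functions in `Park_{a,b}` fixed by `w` (acting by
permuting positions) equals `b^(c-1)`. -/
theorem card_parking_fixed_by_perm (a b : ℕ) (ha : 0 < a) (hb : 0 < b)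
    (hab : Nat.Coprime a b) (w : Equiv.Perm (Fin a)) :
    Set.ncard {p : Fin a → ℕ | IsRatParking a b p ∧ p ∘ ⇑w = p} =
      b ^ (cycleCount w - 1) := by
  have : NeZero b := ⟨hb.ne'⟩
  have hfixed : Nat.card {g : Fin a → ZMod b // g ∘ w = g} = b ^ cycleCount w := by
    rw [card_comp_eq_self, card_quotient_sameCycle, Nat.card_zmod]
    rfl
  have hcount := card_fixed_eq_card_fixed_isZeroParking_mul hab w
  obtain ⟨c, hc⟩ := Nat.exists_eq_add_one.2 (cycleCount_pos ha w)
  rw [hfixed, hc, pow_succ] at hcount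
  rw [setOf_isRatParking_fixed_eq_image, Set.ncard_image_of_injective _ val_add_one_injective,
    hc, Nat.add_sub_cancel, ← Nat.card_coe_set_eq]
  exact (Nat.eq_of_mul_eq_mul_right hb hcount).symm
end

section
/- Let a, b be coprime positive integers. The total number of rational slope parking functions Park_{a,b} is b^{a-1}. -/
namespace RatParkAux

open Finset

variable {a b : ℕ}

/-- number of coordinates with value (as a natural `< b`) less than `w`. -/
def M (a b : ℕ) (f : Fin a → ZMod b) (w : ℕ) : ℕ :=
  #(Finset.univ.filter fun j => (f j).val < w)

/-- the parking condition on `ZMod b`-valued functions. -/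
def park (a b : ℕ) (f : Fin a → ZMod b) : Prop :=
  ∀ w ≤ b, a * w ≤ b * M a b f w

/-- shifting every coordinate by `c`. -/
def shiftf (f : Fin a → ZMod b) (c : ZMod b) : Fin a → ZMod b :=
  fun j => f j + c

/-- extension of `M` to all naturals, periodically with increment `a`. -/
def Mhat (a b : ℕ) (f : Fin a → ZMod b) (w : ℕ) : ℕ :=
  a * (w / b) + M a b f (w % b)

/-- the (periodic) height function. -/
def H (a b : ℕ) (f : Fin a → ZMod b) (w : ℕ) : ℤ :=
  (b : ℤ) * Mhat a b f w - a * w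

lemma M_zero (f : Fin a → ZMod b) : M a b f 0 = 0 := by
  simp [M]

lemma M_le (f : Fin a → ZMod b) (w : ℕ) : M a b f w ≤ a := by
  unfold M
  exact le_trans (Finset.card_filter_le _ _) (by simp)

lemma M_b [NeZero b] (f : Fin a → ZMod b) {w : ℕ} (hw : b ≤ w) : M a b f w = a := by
  have h : (Finset.univ.filter fun j => (f j).val < w) = Finset.univ := by
    apply Finset.filter_true_of_mem
    intro j _
    exact lt_of_lt_of_le (ZMod.val_lt _) hw
  simp [M, h]

lemma Mhat_eq [NeZero b] (f : Fin a → ZMod b) {w : ℕ} (hw : w ≤ b) :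
    Mhat a b f w = M a b f w := by
  have hb : 0 < b := Nat.pos_of_ne_zero (NeZero.ne b)
  rcases eq_or_lt_of_le hw with h | h
  · subst h
    simp [Mhat, Nat.div_self hb, Nat.mod_self, M_zero, M_b f (le_refl w)]
  · simp [Mhat, Nat.div_eq_of_lt h, Nat.mod_eq_of_lt h]

lemma Mhat_b_add [NeZero b] (f : Fin a → ZMod b) (u : ℕ) :
    Mhat a b f (b + u) = a + Mhat a b f u := by
  have hb : 0 < b := Nat.pos_of_ne_zero (NeZero.ne b)
  unfold Mhat
  rw [Nat.add_div_left u hb, Nat.add_mod_left]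
  ring

lemma H_mod [NeZero b] (f : Fin a → ZMod b) (w : ℕ) :
    H a b f w = H a b f (w % b) := by
  have hb : 0 < b := Nat.pos_of_ne_zero (NeZero.ne b)
  have h1 : (w % b) % b = w % b := Nat.mod_mod_of_dvd _ dvd_rfl
  have h2 : (w % b) / b = 0 := Nat.div_eq_of_lt (Nat.mod_lt _ hb)
  unfold H Mhat
  rw [h1, h2]
  set q := w / b with hq
  set r := w % b with hr
  have h3 : b * q + r = w := Nat.div_add_mod w b
  have h3' : ((b : ℤ)) * (q : ℤ) + (r : ℤ) = (w : ℤ) := by exact_mod_cast h3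
  push_cast [← hq, ← hr]
  linear_combination ((a : ℤ)) * h3'

lemma H_zero (f : Fin a → ZMod b) : H a b f 0 = 0 := by
  simp [H, Mhat, M]

lemma H_b [NeZero b] (f : Fin a → ZMod b) : H a b f b = 0 := by
  rw [H, Mhat_eq f (le_refl b), M_b f (le_refl b)]
  push_cast
  ring

lemma shift_Mhat [NeZero b] (f : Fin a → ZMod b) (c : ZMod b) {w : ℕ} (hw : w ≤ b) :
    Mhat a b f (b - c.val + w) =
      Mhat a b f (b - c.val) + M a b (shiftf f c) w := by
  have hb : 0 < b := Nat.pos_of_ne_zero (NeZero.ne b)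
  have hcv : c.val < b := ZMod.val_lt c
  set s := b - c.val with hs
  have hMs : Mhat a b f s = M a b f s := Mhat_eq f (by omega)
  have hmod1 : ∀ j : Fin a, (f j).val < s → (shiftf f c j).val = (f j).val + c.val := by
    intro j h
    have hv : (f j).val < b := ZMod.val_lt _
    show (f j + c).val = _
    rw [ZMod.val_add, Nat.mod_eq_of_lt (by omega)]
  have hmod2 : ∀ j : Fin a, s ≤ (f j).val → (shiftf f c j).val = (f j).val - s := by
    intro j h
    have hv : (f j).val < b := ZMod.val_lt _
    show (f j + c).val = _
    rw [ZMod.val_add, Nat.mod_eq_sub_mod (by omega), Nat.mod_eq_of_lt (by omega)]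
    omega
  rcases le_or_gt (s + w) b with hc | hc
  · rw [Mhat_eq f (show s + w ≤ b by omega), hMs]
    unfold M
    rw [Finset.card_filter, Finset.card_filter, Finset.card_filter, ← Finset.sum_add_distrib]
    apply Finset.sum_congr rfl
    intro j _
    have hv : (f j).val < b := ZMod.val_lt _
    rcases lt_or_ge (f j).val s with h | h
    · rw [hmod1 j h]; split_ifs <;> omega
    · rw [hmod2 j h]; split_ifs <;> omega
  · have h1 : s + w = b + (s + w - b) := by omega
    rw [h1, Mhat_b_add, Mhat_eq f (show s + w - b ≤ b by omega), hMs]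
    unfold M
    rw [Finset.card_filter, Finset.card_filter, Finset.card_filter]
    have key : ∀ j : Fin a,
        (1 : ℕ) + (if (f j).val < s + w - b then 1 else 0) =
          (if (f j).val < s then 1 else 0) + (if (shiftf f c j).val < w then 1 else 0) := by
      intro j
      have hv : (f j).val < b := ZMod.val_lt _
      rcases lt_or_ge (f j).val s with h | h
      · rw [hmod1 j h]; split_ifs <;> omega
      · rw [hmod2 j h]; split_ifs <;> omega
    calc a + ∑ j : Fin a, (if (f j).val < s + w - b then 1 else 0)
        = ∑ j : Fin a, ((1 : ℕ) + if (f j).val < s + w - b then 1 else 0) := by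
          rw [Finset.sum_add_distrib]
          simp
      _ = ∑ j : Fin a, ((if (f j).val < s then 1 else 0)
            + if (shiftf f c j).val < w then 1 else 0) :=
          Finset.sum_congr rfl (fun j _ => key j)
      _ = _ := Finset.sum_add_distrib

lemma park_shift_iff [NeZero b] (f : Fin a → ZMod b) (c : ZMod b) :
    park a b (shiftf f c) ↔ ∀ u ≤ b, H a b f (b - c.val) ≤ H a b f u := by
  have hb : 0 < b := Nat.pos_of_ne_zero (NeZero.ne b)
  have hcv : c.val < b := ZMod.val_lt c
  set s := b - c.val with hs
  have key : ∀ w ≤ b, (a * w ≤ b * M a b (shiftf f c) w ↔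
      H a b f s ≤ H a b f (s + w)) := by
    intro w hw
    have hsm := shift_Mhat f c hw
    rw [← hs] at hsm
    have hsm' : ((Mhat a b f (s + w) : ℤ)) =
        (Mhat a b f s : ℤ) + (M a b (shiftf f c) w : ℤ) := by exact_mod_cast hsm
    have hH : H a b f (s + w) = H a b f s +
        ((b : ℤ) * (M a b (shiftf f c) w : ℤ) - (a : ℤ) * w) := by
      unfold H
      rw [hsm']
      push_cast
      ring
    rw [hH]
    constructor
    · intro h
      have h' : ((a : ℤ)) * w ≤ (b : ℤ) * (M a b (shiftf f c) w : ℤ) := by exact_mod_cast h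
      linarith
    · intro h
      have h' : ((a : ℤ)) * w ≤ (b : ℤ) * (M a b (shiftf f c) w : ℤ) := by linarith
      exact_mod_cast h'
  constructor
  · intro hp u hu
    have hsw : (b + u - s) % b ≤ b := le_of_lt (Nat.mod_lt _ hb)
    have h1 := (key _ hsw).mp (hp _ hsw)
    have e1 : s + (b + u - s) = b + u := by omega
    have e2 : (s + (b + u - s) % b) % b = u % b := by
      conv_lhs => rw [Nat.add_mod]
      rw [Nat.mod_mod_of_dvd _ dvd_rfl, ← Nat.add_mod, e1, Nat.add_mod_left]
    calc H a b f s ≤ H a b f (s + (b + u - s) % b) := h1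
      _ = H a b f (u % b) := by rw [H_mod, e2]
      _ = H a b f u := (H_mod f u).symm
  · intro hmin w hw
    apply (key w hw).mpr
    calc H a b f s ≤ H a b f ((s + w) % b) := hmin _ (le_of_lt (Nat.mod_lt _ hb))
      _ = H a b f (s + w) := (H_mod f (s + w)).symm

lemma exists_unique_shift [NeZero b] (ha : 0 < a) (hab : Nat.Coprime a b)
    (f : Fin a → ZMod b) : ∃! c : ZMod b, park a b (shiftf f c) := by
  have hb : 0 < b := Nat.pos_of_ne_zero (NeZero.ne b)
  obtain ⟨s₀, hs₀m, hs₀min⟩ := Finset.exists_min_image (Finset.Icc 1 b) (H a b f)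
    ⟨b, Finset.mem_Icc.mpr ⟨hb, le_refl b⟩⟩
  obtain ⟨h1s, hsb⟩ := Finset.mem_Icc.mp hs₀m
  have hglob : ∀ u ≤ b, H a b f s₀ ≤ H a b f u := by
    intro u hu
    rcases Nat.eq_zero_or_pos u with h0 | h0
    · subst h0
      rw [H_zero, ← H_b f]
      exact hs₀min b (Finset.mem_Icc.mpr ⟨hb, le_refl b⟩)
    · exact hs₀min u (Finset.mem_Icc.mpr ⟨h0, hu⟩)
  have hval : ((b - s₀ : ℕ) : ZMod b).val = b - s₀ := by
    rw [ZMod.val_natCast, Nat.mod_eq_of_lt (by omega)]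
  refine ⟨((b - s₀ : ℕ) : ZMod b), ?_, ?_⟩
  · show park a b (shiftf f ((b - s₀ : ℕ) : ZMod b))
    rw [park_shift_iff, hval]
    have e : b - (b - s₀) = s₀ := by omega
    rw [e]
    exact hglob
  · intro c hc
    rw [park_shift_iff] at hc
    have hcv : c.val < b := ZMod.val_lt c
    set s' := b - c.val with hs'
    have h1 : H a b f s' ≤ H a b f s₀ := hc s₀ hsb
    have h2 : H a b f s₀ ≤ H a b f s' := hglob s' (by omega)
    have heq : H a b f s' = H a b f s₀ := le_antisymm h1 h2
    have hdvd : (b : ℤ) ∣ (a : ℤ) * ((s' : ℤ) - (s₀ : ℤ)) := by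
      refine ⟨(Mhat a b f s' : ℤ) - (Mhat a b f s₀ : ℤ), ?_⟩
      unfold H at heq
      linarith [heq]
    have hcop : IsCoprime (b : ℤ) (a : ℤ) :=
      (Nat.isCoprime_iff_coprime.mpr hab.symm)
    have hdvd2 : (b : ℤ) ∣ ((s' : ℤ) - (s₀ : ℤ)) := hcop.dvd_of_dvd_mul_left hdvd
    have habs : |((s' : ℤ) - (s₀ : ℤ))| < (b : ℤ) := by
      rw [abs_lt]
      constructor <;> push_cast <;> omega
    have hzero : ((s' : ℤ) - (s₀ : ℤ)) = 0 := Int.eq_zero_of_abs_lt_dvd hdvd2 habs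
    have hss : s' = s₀ := by omega
    have hcval : c.val = b - s₀ := by omega
    apply ZMod.val_injective
    rw [hval, hcval]

/-- count of coordinates of a ℕ-valued function that are `≤ w`. -/
def Ncnt (a : ℕ) (p : Fin a → ℕ) (w : ℕ) : ℕ :=
  #(Finset.univ.filter fun j => p j ≤ w)

lemma perm_count (p : Fin a → ℕ) (σ : Equiv.Perm (Fin a)) (w : ℕ) :
    #(Finset.univ.filter fun j => p (σ j) ≤ w) = Ncnt a p w := by
  unfold Ncnt
  exact Finset.card_equiv σ (by intro j; simp)

lemma Ncnt_le (p : Fin a → ℕ) (w : ℕ) : Ncnt a p w ≤ a := by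
  unfold Ncnt
  exact le_trans (Finset.card_filter_le _ _) (by simp)

lemma sorted_iff_count (p : Fin a → ℕ) (h1 : ∀ i, 1 ≤ p i) :
    (∀ i : Fin a, a * (p (Tuple.sort p i) - 1) ≤ b * (i : ℕ)) ↔
    (∀ w, Ncnt a p w < a → a * w ≤ b * Ncnt a p w) := by
  set g : Fin a → ℕ := p ∘ Tuple.sort p with hgdef
  have hg : Monotone g := Tuple.monotone_sort p
  have hcnt : ∀ w, #(Finset.univ.filter fun j => g j ≤ w) = Ncnt a p w :=
    fun w => perm_count p (Tuple.sort p) w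
  have hgP : ∀ i : Fin a, p (Tuple.sort p i) = g i := fun i => rfl
  constructor
  · intro hp w hlt
    set k := Ncnt a p w with hk
    have hgi : w < g ⟨k, hlt⟩ := by
      by_contra hcon
      push_neg at hcon
      have hsub : (Finset.Iic (⟨k, hlt⟩ : Fin a)) ⊆
          Finset.univ.filter fun j => g j ≤ w := by
        intro j hj
        rw [Finset.mem_Iic] at hj
        simp only [Finset.mem_filter, Finset.mem_univ, true_and]
        exact le_trans (hg hj) hcon
      have hcard : k + 1 ≤ #(Finset.univ.filter fun j => g j ≤ w) := by
        calc k + 1 = #(Finset.Iic (⟨k, hlt⟩ : Fin a)) := by rw [Fin.card_Iic]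
          _ ≤ _ := Finset.card_le_card hsub
      rw [hcnt] at hcard
      omega
    have hbd := hp ⟨k, hlt⟩
    rw [hgP] at hbd
    calc a * w ≤ a * (g ⟨k, hlt⟩ - 1) := Nat.mul_le_mul_left _ (by omega)
      _ ≤ b * k := hbd
  · intro hC i
    rw [hgP]
    have hgi1 : 1 ≤ g i := h1 _
    set v := g i - 1 with hv
    have hsub : (Finset.univ.filter fun j => g j ≤ v) ⊆ Finset.Iio i := by
      intro j hj
      simp only [Finset.mem_filter, Finset.mem_univ, true_and] at hj
      rw [Finset.mem_Iio]
      by_contra hcon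
      push_neg at hcon
      have := hg hcon
      omega
    have hNle : Ncnt a p v ≤ (i : ℕ) := by
      rw [← hcnt]
      calc #(Finset.univ.filter fun j => g j ≤ v) ≤ #(Finset.Iio i) :=
          Finset.card_le_card hsub
        _ = (i : ℕ) := Fin.card_Iio i
    have hNlt : Ncnt a p v < a := lt_of_le_of_lt hNle i.isLt
    calc a * (g i - 1) = a * v := rfl
      _ ≤ b * Ncnt a p v := hC v hNlt
      _ ≤ b * (i : ℕ) := Nat.mul_le_mul_left _ hNle

lemma park_vals_le (ha : 0 < a) (hb : 0 < b) (p : Fin a → ℕ) (h1 : ∀ i, 1 ≤ p i)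
    (hC : ∀ w, Ncnt a p w < a → a * w ≤ b * Ncnt a p w) : ∀ j, p j ≤ b := by
  intro j
  by_contra hcon
  push_neg at hcon
  have hsub : (Finset.univ.filter fun i => p i ≤ b) ⊆ Finset.univ.erase j := by
    intro x hx
    simp only [Finset.mem_filter, Finset.mem_univ, true_and] at hx
    rw [Finset.mem_erase]
    refine ⟨?_, Finset.mem_univ x⟩
    rintro rfl
    omega
  have hNb : Ncnt a p b < a := by
    calc Ncnt a p b ≤ #(Finset.univ.erase j) := Finset.card_le_card hsub
      _ = a - 1 := by rw [Finset.card_erase_of_mem (Finset.mem_univ j)]; simp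
      _ < a := by omega
  have h0 := hC b hNb
  have h2 : b * Ncnt a p b ≤ b * (a - 1) := Nat.mul_le_mul_left _ (by omega)
  have h3 : a * b ≤ b * (a - 1) := le_trans h0 h2
  nlinarith [Nat.mul_comm a b, Nat.mul_sub_one a b]

lemma isRatParking_iff [NeZero b] (ha : 0 < a) (hb : 0 < b) (p : Fin a → ℕ) :
    IsRatParking a b p ↔
      ∃ g : Fin a → ZMod b, park a b g ∧ p = fun j => (g j).val + 1 := by
  constructor
  · rintro ⟨h1, h2⟩
    have hC := (sorted_iff_count p h1).mp h2
    have hle : ∀ j, p j ≤ b := park_vals_le ha hb p h1 hC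
    have hval : ∀ j, (((p j - 1 : ℕ) : ZMod b)).val = p j - 1 := by
      intro j
      rw [ZMod.val_natCast, Nat.mod_eq_of_lt (by have := h1 j; have := hle j; omega)]
    refine ⟨fun j => ((p j - 1 : ℕ) : ZMod b), ?_, ?_⟩
    · intro w hw
      have hM : M a b (fun j => ((p j - 1 : ℕ) : ZMod b)) w = Ncnt a p w := by
        unfold M Ncnt
        apply congrArg
        apply Finset.filter_congr
        intro j _
        rw [hval j]
        have := h1 j
        omega
      rw [hM]
      rcases lt_or_ge (Ncnt a p w) a with h | h
      · exact hC w h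
      · have hNa : Ncnt a p w = a := le_antisymm (Ncnt_le p w) h
        rw [hNa]
        calc a * w ≤ a * b := Nat.mul_le_mul_left _ hw
          _ = b * a := Nat.mul_comm a b
    · funext j
      rw [hval j]
      have := h1 j
      omega
  · rintro ⟨g, hpark, rfl⟩
    have h1 : ∀ j, 1 ≤ (g j).val + 1 := fun j => by omega
    refine ⟨h1, ?_⟩
    apply (sorted_iff_count _ h1).mpr
    intro w hlt
    have hwb : w < b := by
      by_contra hcon
      push_neg at hcon
      have he : (Finset.univ.filter fun j => (g j).val + 1 ≤ w) = Finset.univ := by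
        apply Finset.filter_true_of_mem
        intro j _
        have := ZMod.val_lt (g j)
        omega
      have : Ncnt a (fun j => (g j).val + 1) w = a := by
        unfold Ncnt
        rw [he]
        simp
      omega
    have hM : M a b g w = Ncnt a (fun j => (g j).val + 1) w := by
      unfold M Ncnt
      apply congrArg
      apply Finset.filter_congr
      intro j _
      show (g j).val < w ↔ (g j).val + 1 ≤ w
      omega
    have := hpark w (le_of_lt hwb)
    rw [hM] at this
    exact this

end RatParkAux

/-- For coprime positive integers `a` and `b`, the total number of rational slope
parking functions `Park_{a,b}` is `b^(a-1)`. -/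
theorem card_rational_parking_functions (a b : ℕ) (ha : 0 < a) (hb : 0 < b)
    (hab : Nat.Coprime a b) :
    Set.ncard {p : Fin a → ℕ | IsRatParking a b p} = b ^ (a - 1) := by
  classical
  haveI : NeZero b := ⟨hb.ne'⟩
  have hEU := fun f : Fin a → ZMod b => RatParkAux.exists_unique_shift ha hab f
  let cf : (Fin a → ZMod b) → ZMod b := fun f => Fintype.choose _ (hEU f)
  have hcf : ∀ f, RatParkAux.park a b (RatParkAux.shiftf f (cf f)) :=
    fun f => Fintype.choose_spec _ (hEU f)
  have huniq : ∀ f c, RatParkAux.park a b (RatParkAux.shiftf f c) → c = cf f := by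
    intro f c hc
    exact (hEU f).unique hc (hcf f)
  let P := {g : Fin a → ZMod b // RatParkAux.park a b g}
  let e : (Fin a → ZMod b) ≃ P × ZMod b :=
    { toFun := fun f => (⟨RatParkAux.shiftf f (cf f), hcf f⟩, cf f)
      invFun := fun gc => RatParkAux.shiftf gc.1.1 (-gc.2)
      left_inv := by
        intro f
        funext j
        simp [RatParkAux.shiftf]
      right_inv := by
        rintro ⟨⟨g, hg⟩, c⟩
        have hfe : RatParkAux.shiftf (RatParkAux.shiftf g (-c)) c = g := by
          funext j; simp [RatParkAux.shiftf]
        have hcc : c = cf (RatParkAux.shiftf g (-c)) := by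
          apply huniq
          rw [hfe]
          exact hg
        refine Prod.ext ?_ hcc.symm
        apply Subtype.ext
        show RatParkAux.shiftf (RatParkAux.shiftf g (-c)) (cf (RatParkAux.shiftf g (-c))) = g
        rw [← hcc, hfe] }
  have hcard : Fintype.card P * b = b ^ a := by
    have h1 : Fintype.card (Fin a → ZMod b) = b ^ a := by
      rw [Fintype.card_fun]
      simp [ZMod.card]
    have h2 : Fintype.card (Fin a → ZMod b) = Fintype.card P * b := by
      rw [Fintype.card_congr e, Fintype.card_prod, ZMod.card]
    omega
  have hP : Fintype.card P = b ^ (a - 1) := by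
    have hpow : b ^ a = b ^ (a - 1) * b := by
      rw [← pow_succ]
      congr 1
      omega
    rw [hpow] at hcard
    exact Nat.eq_of_mul_eq_mul_right hb hcard
  have hset : {p : Fin a → ℕ | IsRatParking a b p} =
      Set.range (fun g : P => fun j => (g.1 j).val + 1) := by
    ext p
    rw [Set.mem_setOf_eq, RatParkAux.isRatParking_iff ha hb p]
    constructor
    · rintro ⟨g, hg, rfl⟩
      exact ⟨⟨g, hg⟩, rfl⟩
    · rintro ⟨⟨g, hg⟩, rfl⟩
      exact ⟨g, hg, rfl⟩
  have hinj : Function.Injective (fun g : P => fun j => (g.1 j).val + 1) := by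
    intro g g' h
    apply Subtype.ext
    funext j
    have h2 : (g.1 j).val + 1 = (g'.1 j).val + 1 := congrFun h j
    exact ZMod.val_injective b (by omega)
  rw [hset, ← Nat.card_coe_set_eq, Nat.card_range_of_injective hinj,
    Nat.card_eq_fintype_card, hP]
end

section
/- Let w ∈ S_a, q > 1, and d with qd ≡ 0 mod (b-1) where q = (b-1)/d. Define an action of g on {0,1,...,b-1} fixing 0 and cycling (1,2,...,b-1). The number of functions e : [a] → {0,1,...,b-1} satisfying e(w(j)) = g^d(e(j)) for all j equals b^{r}, where r is the number of cycles of w with length divisible by q. -/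
/-- The action of `g^d` on `{0, 1, ..., b-1}`: it fixes `0` and sends
`k ∈ {1, ..., b-1}` to `k + d`, with addition modulo `b - 1`
(representatives taken in `{1, ..., b-1}`). -/
def gPow (b d k : ℕ) : ℕ :=
  if k = 0 then 0 else (k - 1 + d) % (b - 1) + 1

namespace CardEquivAux

open Equiv Equiv.Perm Finset

lemma gPow_zero (b d : ℕ) : gPow b d 0 = 0 := rfl

lemma gPow_iter_zero (b d n : ℕ) : (gPow b d)^[n] 0 = 0 :=
  Function.iterate_fixed (gPow_zero b d) n

lemma gPow_le {b : ℕ} (hb : 0 < b - 1) (d k : ℕ) : gPow b d k ≤ b - 1 := by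
  unfold gPow
  split
  · omega
  · have := Nat.mod_lt (k - 1 + d) hb
    omega

lemma gPow_iter_le {b : ℕ} (hb : 0 < b - 1) (d : ℕ) {k : ℕ} (hk : k ≤ b - 1) (n : ℕ) :
    (gPow b d)^[n] k ≤ b - 1 := by
  cases n with
  | zero => simpa
  | succ n => rw [Function.iterate_succ_apply']; exact gPow_le hb d _

lemma gPow_iter {b : ℕ} (hb : 0 < b - 1) (d : ℕ) {k : ℕ} (h1 : 1 ≤ k) (h2 : k ≤ b - 1)
    (n : ℕ) : (gPow b d)^[n] k = (k - 1 + n * d) % (b - 1) + 1 := by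
  induction n with
  | zero =>
      simp only [Function.iterate_zero, id_eq, Nat.zero_mul, Nat.add_zero]
      rw [Nat.mod_eq_of_lt (by omega)]
      omega
  | succ n ih =>
      rw [Function.iterate_succ_apply', ih]
      unfold gPow
      rw [if_neg (by omega)]
      have h3 : k - 1 + n * d % (b-1) + d = k - 1 + n * d % (b-1) + d := rfl
      congr 1
      rw [Nat.add_sub_cancel, Nat.mod_add_mod]
      congr 1
      ring

lemma gPow_iter_fixed {b q d : ℕ} (hbd : b - 1 = q * d) (hb : 0 < b - 1) {k : ℕ}
    (h2 : k ≤ b - 1) {L : ℕ} (hL : q ∣ L) : (gPow b d)^[L] k = k := by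
  rcases Nat.eq_zero_or_pos k with rfl | h1
  · exact gPow_iter_zero b d L
  rw [gPow_iter hb d h1 h2]
  obtain ⟨m, rfl⟩ := hL
  have h3 : k - 1 + q * m * d = k - 1 + m * (b - 1) := by rw [hbd]; ring
  rw [h3, Nat.add_mul_mod_self_right, Nat.mod_eq_of_lt (by omega)]
  omega

lemma eq_zero_of_gPow_iter_fixed {b q d : ℕ} (hq : 1 < q) (hd : 0 < d)
    (hbd : b - 1 = q * d) {k : ℕ} (h2 : k ≤ b - 1) {L : ℕ} (hL : ¬ q ∣ L)
    (hfix : (gPow b d)^[L] k = k) : k = 0 := by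
  by_contra h0
  have h1 : 1 ≤ k := Nat.one_le_iff_ne_zero.mpr h0
  have hb : 0 < b - 1 := by rw [hbd]; positivity
  rw [gPow_iter hb d h1 h2] at hfix
  have hmod : (k - 1 + L * d) % (b - 1) = (k - 1) % (b - 1) := by
    rw [Nat.mod_eq_of_lt (show k - 1 < b - 1 by omega)]; omega
  have hdvd : (b - 1) ∣ (k - 1 + L * d) - (k - 1) :=
    (Nat.modEq_iff_dvd' (Nat.le_add_right _ _)).mp hmod.symm
  rw [Nat.add_sub_cancel_left] at hdvd
  rw [hbd] at hdvd
  exact hL ((Nat.mul_dvd_mul_iff_right hd).mp hdvd)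

lemma gPow_iter_congr {b q d : ℕ} (hq : 0 < q) (hd : 0 < d) (hbd : b - 1 = q * d) {k : ℕ}
    (h2 : k ≤ b - 1) {L m n : ℕ} (hL : q ∣ L) (hmn : m ≡ n [MOD L]) :
    (gPow b d)^[m] k = (gPow b d)^[n] k := by
  rcases Nat.eq_zero_or_pos k with rfl | h1
  · simp [gPow_iter_zero]
  have hb : 0 < b - 1 := by rw [hbd]; positivity
  rw [gPow_iter hb d h1 h2, gPow_iter hb d h1 h2]
  have h3 : m ≡ n [MOD q] := hmn.of_dvd hL
  have h4 : m * d ≡ n * d [MOD b - 1] := by rw [hbd]; exact h3.mul_right' _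
  have h5 : k - 1 + m * d ≡ k - 1 + n * d [MOD b - 1] := h4.add_left _
  rw [Nat.ModEq] at h5
  rw [h5]

variable {a : ℕ}

/-- A canonical basepoint on the cycle of `j` under `w`. -/
def basept (w : Equiv.Perm (Fin a)) (j : Fin a) : Fin a :=
  if h : ((w.cycleOf j).support).Nonempty then (w.cycleOf j).support.min' h else j

lemma basept_mem {w : Equiv.Perm (Fin a)} {j : Fin a} (hj : j ∈ w.support) :
    basept w j ∈ (w.cycleOf j).support := by
  have h : ((w.cycleOf j).support).Nonempty :=
    Equiv.Perm.support_cycleOf_nonempty.mpr (Equiv.Perm.mem_support.mp hj)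
  rw [basept, dif_pos h]
  exact Finset.min'_mem _ h

lemma basept_apply (w : Equiv.Perm (Fin a)) (j : Fin a) : basept w (w j) = basept w j := by
  unfold basept
  simp only [Equiv.Perm.cycleOf_self_apply]
  split
  · rfl
  · rename_i h
    by_contra hne
    exact h (Equiv.Perm.support_cycleOf_nonempty.mpr (by simpa using hne))

lemma exists_pow_basept {w : Equiv.Perm (Fin a)} {j : Fin a} (hj : j ∈ w.support) :
    ∃ n : ℕ, (w ^ n) (basept w j) = j := by
  have hb := basept_mem hj
  have hb' : basept w j ∈ w.support := Equiv.Perm.support_cycleOf_le w j hb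
  rw [Equiv.Perm.mem_support_cycleOf_iff] at hb
  obtain ⟨i, -, hi⟩ := hb.1.symm.exists_pow_eq_of_mem_support hb'
  exact ⟨i, hi⟩

/-- The inverse construction: the equivariant function determined by the values `f`
on the basepoints of the qualifying cycles. -/
noncomputable def eFun (b q d : ℕ) (w : Equiv.Perm (Fin a))
    (f : {c : Equiv.Perm (Fin a) //
      c ∈ w.cycleFactorsFinset.filter fun c => q ∣ c.support.card} → ℕ)
    (j : Fin a) : ℕ :=
  if h : w.cycleOf j ∈ w.cycleFactorsFinset.filter (fun c => q ∣ c.support.card) then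
    (gPow b d)^[Nat.find (exists_pow_basept (w := w) (j := j)
      (Equiv.Perm.cycleOf_mem_cycleFactorsFinset_iff.mp (Finset.mem_filter.mp h).1))]
      (f ⟨w.cycleOf j, h⟩)
  else 0

lemma eFun_neg {b q d : ℕ} {w : Equiv.Perm (Fin a)} {f} {j : Fin a}
    (h : ¬ w.cycleOf j ∈ w.cycleFactorsFinset.filter (fun c => q ∣ c.support.card)) :
    eFun b q d w f j = 0 := dif_neg h

lemma eFun_le {b q d : ℕ} (hb : 0 < b - 1) {w : Equiv.Perm (Fin a)} {f}
    (hf : ∀ c, f c ≤ b - 1) (j : Fin a) : eFun b q d w f j ≤ b - 1 := by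
  rw [eFun]
  split
  · exact gPow_iter_le hb d (hf _) _
  · omega

lemma eFun_spec {b q d : ℕ} (hq : 0 < q) (hd : 0 < d) (hbd : b - 1 = q * d)
    {w : Equiv.Perm (Fin a)} {f} (hf : ∀ c, f c ≤ b - 1)
    {j : Fin a}
    (h : w.cycleOf j ∈ w.cycleFactorsFinset.filter (fun c => q ∣ c.support.card))
    {n : ℕ} (hn : (w ^ n) (basept w j) = j) :
    eFun b q d w f j = (gPow b d)^[n] (f ⟨w.cycleOf j, h⟩) := by
  rw [eFun, dif_pos h]
  have hj : j ∈ w.support :=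
    Equiv.Perm.cycleOf_mem_cycleFactorsFinset_iff.mp (Finset.mem_filter.mp h).1
  refine gPow_iter_congr hq hd hbd (hf _) (Finset.mem_filter.mp h).2 ?_
  have hfind : (w ^ (Nat.find (exists_pow_basept (w := w) (j := j) hj))) (basept w j) = j :=
    Nat.find_spec (exists_pow_basept hj)
  exact ((w.isCycleOn_support_cycleOf j).pow_apply_eq_pow_apply (basept_mem hj)).mp
    (hfind.trans hn.symm)

lemma eFun_equivariant {b q d : ℕ} (hq : 0 < q) (hd : 0 < d) (hbd : b - 1 = q * d)
    {w : Equiv.Perm (Fin a)} {f} (hf : ∀ c, f c ≤ b - 1) (j : Fin a) :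
    eFun b q d w f (w j) = gPow b d (eFun b q d w f j) := by
  have hcyc : w.cycleOf (w j) = w.cycleOf j := w.cycleOf_self_apply j
  by_cases h : w.cycleOf j ∈ w.cycleFactorsFinset.filter (fun c => q ∣ c.support.card)
  · have hj : j ∈ w.support :=
      Equiv.Perm.cycleOf_mem_cycleFactorsFinset_iff.mp (Finset.mem_filter.mp h).1
    obtain ⟨n, hn⟩ := exists_pow_basept hj
    have h' : w.cycleOf (w j) ∈ w.cycleFactorsFinset.filter (fun c => q ∣ c.support.card) := by
      rw [hcyc]; exact h
    have hn' : (w ^ (n + 1)) (basept w (w j)) = w j := by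
      rw [basept_apply, pow_succ', Equiv.Perm.mul_apply, hn]
    rw [eFun_spec hq hd hbd hf h' hn', eFun_spec hq hd hbd hf h hn]
    have hsub : (⟨w.cycleOf (w j), h'⟩ :
        {c : Equiv.Perm (Fin a) // c ∈ w.cycleFactorsFinset.filter fun c => q ∣ c.support.card})
        = ⟨w.cycleOf j, h⟩ := Subtype.ext hcyc
    rw [hsub]
    exact Function.iterate_succ_apply' _ _ _
  · have h' : ¬ w.cycleOf (w j) ∈ w.cycleFactorsFinset.filter (fun c => q ∣ c.support.card) := by
      rw [hcyc]; exact h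
    rw [eFun_neg h', eFun_neg h, gPow_zero]

lemma equivariant_pow {b d : ℕ} {w : Equiv.Perm (Fin a)} {e : Fin a → ℕ}
    (he : ∀ j, e (w j) = gPow b d (e j)) (n : ℕ) (j : Fin a) :
    e ((w ^ n) j) = (gPow b d)^[n] (e j) := by
  induction n with
  | zero => simp
  | succ n ih =>
      rw [pow_succ', Equiv.Perm.mul_apply, he, ih]
      exact (Function.iterate_succ_apply' _ _ _).symm

lemma equivariant_eq_zero {b q d : ℕ} (hq : 1 < q) (hd : 0 < d) (hbd : b - 1 = q * d)
    {w : Equiv.Perm (Fin a)} {e : Fin a → ℕ} (hle : ∀ j, e j ≤ b - 1)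
    (he : ∀ j, e (w j) = gPow b d (e j)) {j : Fin a}
    (h : ¬ w.cycleOf j ∈ w.cycleFactorsFinset.filter (fun c => q ∣ c.support.card)) :
    e j = 0 := by
  by_cases hj : j ∈ w.support
  · have hcm : w.cycleOf j ∈ w.cycleFactorsFinset :=
      Equiv.Perm.cycleOf_mem_cycleFactorsFinset_iff.mpr hj
    have hL : ¬ q ∣ (w.cycleOf j).support.card := fun hdvd =>
      h (Finset.mem_filter.mpr ⟨hcm, hdvd⟩)
    have hfix : (w ^ (w.cycleOf j).support.card) j = j := by
      have h0 := Equiv.Perm.pow_mod_card_support_cycleOf_self_apply w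
        ((w.cycleOf j).support.card) j
      rw [Nat.mod_self] at h0
      simpa using h0.symm
    have h1 := equivariant_pow he ((w.cycleOf j).support.card) j
    rw [hfix] at h1
    exact eq_zero_of_gPow_iter_fixed hq hd hbd (hle j) hL h1.symm
  · have hw : w j = j := Equiv.Perm.notMem_support.mp hj
    have h1 : (gPow b d)^[1] (e j) = e j := by
      rw [Function.iterate_one]
      have := he j
      rw [hw] at this
      exact this.symm
    have hq1 : ¬ q ∣ 1 := fun hdvd => by
      have := Nat.dvd_one.mp hdvd
      omega
    exact eq_zero_of_gPow_iter_fixed hq hd hbd (hle j) hq1 h1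

end CardEquivAux

open CardEquivAux Equiv Equiv.Perm Finset in
/-- Counting `(w, g^d)`-equivariant functions: for `w ∈ S_a`, `q > 1` with
`b - 1 = q * d`, the number of functions `e : [a] → {0, 1, ..., b-1}` with
`e (w j) = g^d (e j)` for all `j` equals `b^r`, where `r` is the number of
cycles of `w` whose length is divisible by `q`. -/
theorem card_equivariant_functions (a b q d : ℕ) (hq : 1 < q) (hd : 0 < d)
    (hbd : b - 1 = q * d) (w : Equiv.Perm (Fin a)) :
    Set.ncard {e : Fin a → ℕ |
        (∀ j, e j ≤ b - 1) ∧ ∀ j, e (w j) = gPow b d (e j)} =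
      b ^ (w.cycleType.filter (fun l => q ∣ l)).card := by
  classical
  have hq0 : 0 < q := by omega
  have hb1 : 0 < b - 1 := by rw [hbd]; positivity
  have hb0 : 0 < b := by omega
  set E := {e : Fin a → ℕ | (∀ j, e j ≤ b - 1) ∧ ∀ j, e (w j) = gPow b d (e j)} with hE
  set s := w.cycleFactorsFinset.filter (fun c => q ∣ c.support.card) with hs
  -- number of qualifying cycles
  have hrhs : (w.cycleType.filter fun l => q ∣ l).card = s.card := by
    rw [Equiv.Perm.cycleType_def, Multiset.filter_map, Multiset.card_map]
    rfl
  -- nonempty support for cycle factors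
  have hne : ∀ c : Equiv.Perm (Fin a), c ∈ w.cycleFactorsFinset → c.support.Nonempty := by
    intro c hc
    have h2 := (Equiv.Perm.mem_cycleFactorsFinset_iff.mp hc).1.two_le_card_support
    exact Finset.card_pos.mp (by omega)
  have hnes : ∀ c : Equiv.Perm (Fin a), c ∈ s → c.support.Nonempty := by
    intro c hc; exact hne c (Finset.mem_filter.mp hc).1
  -- The bijection
  let F : E → (s → Fin b) := fun e c =>
    ⟨e.1 (c.1.support.min' (hnes c.1 c.2)), by
      have := e.2.1 (c.1.support.min' (hnes c.1 c.2)); omega⟩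
  have hFbij : Function.Bijective F := by
    constructor
    · rintro ⟨e₁, he₁⟩ ⟨e₂, he₂⟩ h12
      ext j
      show e₁ j = e₂ j
      by_cases hcond : w.cycleOf j ∈ s
      · have hj : j ∈ w.support :=
          Equiv.Perm.cycleOf_mem_cycleFactorsFinset_iff.mp (Finset.mem_filter.mp hcond).1
        obtain ⟨n, hn⟩ := exists_pow_basept hj
        have hnej : ((w.cycleOf j).support).Nonempty :=
          Equiv.Perm.support_cycleOf_nonempty.mpr (Equiv.Perm.mem_support.mp hj)
        have hbp : basept w j = (w.cycleOf j).support.min' hnej := by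
          rw [basept, dif_pos hnej]
        have hval : e₁ ((w.cycleOf j).support.min' hnej)
            = e₂ ((w.cycleOf j).support.min' hnej) := by
          have := congrFun h12 ⟨w.cycleOf j, hcond⟩
          exact congrArg Fin.val this
        have h1 := equivariant_pow he₁.2 n (basept w j)
        have h2 := equivariant_pow he₂.2 n (basept w j)
        rw [hn] at h1 h2
        rw [h1, h2, hbp, hval]
      · rw [equivariant_eq_zero hq hd hbd he₁.1 he₁.2 hcond,
          equivariant_eq_zero hq hd hbd he₂.1 he₂.2 hcond]
    · intro f
      have hf : ∀ c, (fun c => ((f c : Fin b) : ℕ)) c ≤ b - 1 := fun c => by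
        show ((f c : Fin b) : ℕ) ≤ b - 1
        have := (f c).isLt; omega
      refine ⟨⟨eFun b q d w (fun c => ((f c : Fin b) : ℕ)), ?_, ?_⟩, ?_⟩
      · exact fun j => eFun_le hb1 hf j
      · exact fun j => eFun_equivariant hq0 hd hbd hf j
      · funext c
        apply Fin.ext
        show eFun b q d w (fun c => ((f c : Fin b) : ℕ)) (c.1.support.min' (hnes c.1 c.2))
          = (f c : ℕ)
        set p := c.1.support.min' (hnes c.1 c.2) with hp
        have hpc : p ∈ c.1.support := Finset.min'_mem _ _
        have hcyc : w.cycleOf p = c.1 :=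
          (Equiv.Perm.cycle_is_cycleOf hpc (Finset.mem_filter.mp c.2).1).symm
        have hcond : w.cycleOf p ∈ s := by rw [hcyc]; exact c.2
        have hbp : basept w p = p := by
          unfold basept
          simp only [hcyc]
          rw [dif_pos (hnes c.1 c.2)]
        have hn : (w ^ 0) (basept w p) = p := by rw [pow_zero, Equiv.Perm.coe_one, id_eq, hbp]
        rw [eFun_spec hq0 hd hbd hf hcond hn]
        have hsub : (⟨w.cycleOf p, hcond⟩ : {c : Equiv.Perm (Fin a) // c ∈ s}) = c :=
          Subtype.ext hcyc
        rw [Function.iterate_zero, id_eq, hsub]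
  have hcard : Nat.card E = Nat.card (s → Fin b) := Nat.card_congr (Equiv.ofBijective F hFbij)
  rw [← Nat.card_coe_set_eq, hcard, hrhs]
  rw [Nat.card_eq_fintype_card, Fintype.card_fun]
  simp [Fintype.card_coe]
end

section
/- Let P be a noncrossing partition of [n] invariant under rot^d where d | n. Then each ⟨rot^d⟩-orbit of blocks of P contains at most one wrapping block, where a block B is wrapping if B is not central and the interval [min(B), max(B)] contains every block in the ⟨rot^d⟩-orbit of B. -/
/-!
Two wrapping blocks `B` and `C` of one orbit each contain an element below every element of the
other, since each is a translate of the other. Hence they have the same minimum, so they meet,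
and as blocks of one partition they coincide.
-/

open Fin.NatCast

/-- Shifting a set of labels by `d` modulo `n` (the action of `rot^d`). -/
def shiftSet {n : ℕ} [NeZero n] (d : ℕ) (B : Set (Fin n)) : Set (Fin n) :=
  (fun x : Fin n => x + (d : Fin n)) '' B

/-- A block `B` is central (for `d`-fold rotation) if `rot^d` maps it to itself. -/
def IsCentral {n : ℕ} [NeZero n] (d : ℕ) (B : Set (Fin n)) : Prop :=
  shiftSet d B = B

/-- A block `B` is wrapping if it is not central and the interval
`[min B, max B]` contains every block in the `⟨rot^d⟩`-orbit of `B`. -/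
def IsWrapping {n : ℕ} [NeZero n] (d : ℕ) (B : Set (Fin n)) : Prop :=
  ¬ IsCentral d B ∧
    ∀ k : ℕ, ∀ y ∈ (shiftSet d)^[k] B, (∃ x ∈ B, x ≤ y) ∧ ∃ x ∈ B, y ≤ x

theorem Set.Finite.inter_nonempty_of_forall_exists_le {α : Type*} [PartialOrder α]
    {A C : Set α} (hA : A.Finite) (hne : A.Nonempty) (hAC : ∀ y ∈ C, ∃ x ∈ A, x ≤ y)
    (hCA : ∀ y ∈ A, ∃ x ∈ C, x ≤ y) : (A ∩ C).Nonempty := by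
  obtain ⟨m, hmA, hmin⟩ := hA.exists_minimal hne
  obtain ⟨x, hxC, hxm⟩ := hCA m hmA
  obtain ⟨z, hzA, hzx⟩ := hAC x hxC
  have hxm' : x = m := le_antisymm hxm ((hmin hzA (hzx.trans hxm)).trans hzx)
  exact ⟨m, hmA, hxm' ▸ hxC⟩

theorem Equivalence.setOf_eq_setOf {α : Type*} {r : α → α → Prop} (hr : Equivalence r)
    {i j : α} (h : r i j) : {x | r i x} = {x | r j x} :=
  Set.ext fun _ => ⟨hr.trans (hr.symm h), hr.trans h⟩

section Shift

variable {n : ℕ} [NeZero n] (d : ℕ)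

theorem shiftSet_iterate (k : ℕ) (B : Set (Fin n)) :
    (shiftSet d)^[k] B = (· + k • (d : Fin n)) '' B := by
  induction k with
  | zero => simp
  | succ k ih =>
    rw [Function.iterate_succ_apply', ih, shiftSet, Set.image_image, succ_nsmul]
    simp only [add_assoc]

theorem shiftSet_iterate_eq_self_of_dvd {m : ℕ} (hm : n ∣ m) (B : Set (Fin n)) :
    (shiftSet d)^[m] B = B := by
  obtain ⟨c, rfl⟩ := hm
  have h : (n * c) • (d : Fin n) = 0 := by
    have hn : n • (d : Fin n) = 0 := by simpa using card_nsmul_eq_zero (G := Fin n) (x := d)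
    rw [mul_nsmul, hn, smul_zero]
  simp [shiftSet_iterate, h]

variable {r : Fin n → Fin n → Prop}
  (hinv : ∀ x y : Fin n, r x y ↔ r (x + (d : Fin n)) (y + (d : Fin n)))
include hinv

theorem shiftSet_setOf (j : Fin n) :
    shiftSet d {x | r j x} = {x | r (j + (d : Fin n)) x} := by
  ext y
  refine ⟨?_, fun hy => ⟨y - (d : Fin n), ?_, sub_add_cancel y _⟩⟩
  · rintro ⟨x, hx, rfl⟩
    exact (hinv j x).mp hx
  · simpa using (hinv j (y - (d : Fin n))).mpr (by simpa using hy)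

theorem shiftSet_iterate_setOf (j : Fin n) (k : ℕ) :
    (shiftSet d)^[k] {x | r j x} = {x | r (j + k • (d : Fin n)) x} := by
  induction k with
  | zero => simp
  | succ k ih =>
    rw [Function.iterate_succ_apply', ih, shiftSet_setOf d hinv, succ_nsmul, add_assoc]

end Shift

theorem at_most_one_wrapping_block_per_orbit_general (n d : ℕ) [NeZero n]
    (r : Fin n → Fin n → Prop) (hr : Equivalence r)
    (hinv : ∀ x y : Fin n, r x y ↔ r (x + (d : Fin n)) (y + (d : Fin n)))
    (i : Fin n) (k : ℕ)
    (h1 : IsWrapping d {x | r i x}) (h2 : IsWrapping d ((shiftSet d)^[k] {x | r i x})) :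
    (shiftSet d)^[k] {x | r i x} = {x | r i x} := by
  set B : Set (Fin n) := {x | r i x}
  set C := (shiftSet d)^[k] B with hC
  have hback : (shiftSet d)^[k * (n - 1)] C = B := by
    rw [hC, ← Function.iterate_add_apply]
    refine shiftSet_iterate_eq_self_of_dvd d ⟨k, ?_⟩ B
    rw [← Nat.mul_add_one, Nat.sub_one_add_one (NeZero.ne n), mul_comm]
  obtain ⟨a, hia, haC⟩ : (B ∩ C).Nonempty :=
    B.toFinite.inter_nonempty_of_forall_exists_le ⟨i, hr.refl i⟩
      (fun y hy => (h1.2 k y hy).1) (fun y hy => (h2.2 _ y (hback ▸ hy)).1)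
  rw [hC, shiftSet_iterate_setOf d hinv] at haC ⊢
  exact (hr.setOf_eq_setOf (hr.trans hia (hr.symm haC))).symm

/-- In a noncrossing partition of `[n]` invariant under `rot^d` (with `d ∣ n`),
each `⟨rot^d⟩`-orbit of blocks contains at most one wrapping block. -/
theorem at_most_one_wrapping_block_per_orbit (n d : ℕ) [NeZero n] (hd : d ∣ n)
    (r : Fin n → Fin n → Prop) (hr : Equivalence r) (hnc : Noncrossing r)
    (hinv : ∀ x y : Fin n, r x y ↔ r (x + (d : Fin n)) (y + (d : Fin n)))
    (i : Fin n) (k : ℕ)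
    (h1 : IsWrapping d {x | r i x}) (h2 : IsWrapping d ((shiftSet d)^[k] {x | r i x})) :
    (shiftSet d)^[k] {x | r i x} = {x | r i x} :=
  at_most_one_wrapping_block_per_orbit_general n d r hr hinv i k h1 h2
end

section
/- There is a bijection between (n+1,n)-Dyck paths and noncrossing (1,2)-configurations on [n-1], and hence the number of noncrossing (1,2)-configurations on [n-1] equals Cat(n+1,n) = (1/(2n+1)) * binomial(2n+1, n). -/
open DyckStep List

/-- An `(n+1, n)`-Dyck path encoded by its vertical run lengths
`t = (t_1, …, t_n)`: a north/east lattice path from `(0,0)` to `(n, n+1)`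
staying weakly above `y = ((n+1)/n)x`; by coprimality the interior condition is
the strict inequality `n * (t_1 + ⋯ + t_j) > (n+1) * j` for `1 ≤ j ≤ n - 1`. -/
def IsDyckSeq (n : ℕ) (t : Fin n → ℕ) : Prop :=
  (∑ i, t i = n + 1) ∧
    ∀ j : ℕ, 1 ≤ j → j ≤ n - 1 →
      n * (∑ i ∈ Finset.univ.filter (fun i : Fin n => (i : ℕ) < j), t i) > (n + 1) * j

/-- A noncrossing `(1,2)`-configuration on `[m]`: a set of pairwise disjoint
balls (singletons) and arcs (pairs), with no crossing arcs. -/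
def IsNC12Config (m : ℕ) (F : Finset (Finset (Fin m))) : Prop :=
  (∀ s ∈ F, s.card = 1 ∨ s.card = 2) ∧
    (∀ s ∈ F, ∀ t ∈ F, s ≠ t → Disjoint s t) ∧
    ¬ ∃ i1 i2 j1 j2 : Fin m, ({i1, i2} : Finset (Fin m)) ∈ F ∧
        ({j1, j2} : Finset (Fin m)) ∈ F ∧ i1 < j1 ∧ j1 < i2 ∧ i2 < j2

namespace NC12Aux

/-- Run-length decoding: each entry `a` becomes `U^a D`. -/
def gw : List ℕ → List DyckStep
  | [] => []
  | a :: l => List.replicate a U ++ D :: gw l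

lemma gw_append (l₁ l₂ : List ℕ) : gw (l₁ ++ l₂) = gw l₁ ++ gw l₂ := by
  induction l₁ with
  | nil => rfl
  | cons a l ih => simp [gw, ih]

lemma count_U_gw (l : List ℕ) : (gw l).count U = l.sum := by
  induction l with
  | nil => rfl
  | cons a l ih => simp [gw, ih, List.count_replicate]

lemma count_D_gw (l : List ℕ) : (gw l).count D = l.length := by
  induction l with
  | nil => rfl
  | cons a l ih => simp [gw, ih, List.count_replicate]

lemma gw_prefix (l : List ℕ) (c : ℕ)
    (h : ∀ j ≤ l.length, j ≤ c + (l.take j).sum) (i : ℕ) :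
    ((gw l).take i).count D ≤ c + ((gw l).take i).count U := by
  induction l generalizing c i with
  | nil => simp [gw]
  | cons a l ih =>
    have h1 : 1 ≤ c + a := by
      have := h 1 (by simp)
      simpa using this
    have hl : ∀ j ≤ l.length, j ≤ (c + a - 1) + (l.take j).sum := by
      intro j hj
      have := h (j + 1) (by simpa using hj)
      simp [List.take_succ_cons] at this
      omega
    rw [gw]
    rcases le_or_gt i a with hi | hi
    · rw [List.take_append_of_le_length (by simpa using hi)]
      rw [List.take_replicate]
      simp [List.count_replicate]
    · rw [List.take_append]
      have hlen : (List.replicate a U).take i = List.replicate a U := by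
        apply List.take_of_length_le; simpa using hi.le
      rw [hlen]
      have : i - (List.replicate a U).length = i - a := by simp
      rw [this]
      obtain ⟨i', hi'⟩ : ∃ i', i - a = i' + 1 := ⟨i - a - 1, by omega⟩
      rw [hi', List.take_succ_cons]
      have key := ih (c + a - 1) hl i'
      simp only [List.count_append, List.count_cons, List.count_replicate, beq_iff_eq,
        reduceCtorEq]
      simp only [if_true, if_false]
      omega

lemma gw_run_inj {a b : ℕ} {x y : List DyckStep}
    (h : List.replicate a U ++ D :: x = List.replicate b U ++ D :: y) :
    a = b ∧ x = y := by
  induction a generalizing b with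
  | zero =>
    cases b with
    | zero => simpa using h
    | succ b => simp [List.replicate_succ] at h
  | succ a ih =>
    cases b with
    | zero => simp [List.replicate_succ] at h
    | succ b =>
      simp only [List.replicate_succ, List.cons_append, List.cons.injEq] at h
      have := ih (h.2 : _)
      exact ⟨by omega, this.2⟩

lemma gw_inj : Function.Injective gw := by
  intro l₁ l₂ h
  induction l₁ generalizing l₂ with
  | nil =>
    cases l₂ with
    | nil => rfl
    | cons b l => simp [gw] at h
  | cons a l ih =>
    cases l₂ with
    | nil => simp [gw] at h
    | cons b l' =>
      simp only [gw] at h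
      obtain ⟨rfl, h2⟩ := gw_run_inj h
      rw [ih h2]

/-- Surjectivity: every Dyck word arises from a "parking-type" list. -/
lemma gw_surj (p : DyckWord) :
    ∃ l : List ℕ, l.sum = l.length ∧ (∀ j ≤ l.length, j ≤ (l.take j).sum) ∧
      l.length = p.semilength ∧ gw l = p.toList := by
  by_cases hp : p = 0
  · exact ⟨[], by simp, by simp, by rw [hp]; rfl, by rw [hp]; rfl⟩
  · obtain ⟨lq, hq1, hq2, hq3, hq4⟩ := gw_surj p.insidePart
    obtain ⟨lr, hr1, hr2, hr3, hr4⟩ := gw_surj p.outsidePart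
    have hdec := p.nest_insidePart_add_outsidePart hp
    have htoList : p.toList = U :: p.insidePart.toList ++ (D :: p.outsidePart.toList) := by
      conv_lhs => rw [← hdec]
      show ([U] ++ p.insidePart.toList ++ [D]) ++ p.outsidePart.toList = _
      simp
    have hsemi := p.semilength_insidePart_add_semilength_outsidePart_add_one hp
    cases lq with
    | nil =>
      refine ⟨1 :: lr, by simp [hr1]; omega, ?_, ?_, ?_⟩
      · intro j hj
        cases j with
        | zero => simp
        | succ j =>
          have := hr2 j (by simpa using hj)
          simp [List.take_succ_cons]
          omega
      · simp at hq3
        simp only [List.length_cons, hr3, ← hsemi, ← hq3]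
        omega
      · rw [htoList]
        have : p.insidePart.toList = [] := by
          rw [← hq4]; rfl
        simp [gw, this, hr4]
    | cons a tq =>
      refine ⟨(a + 1) :: (tq ++ 0 :: lr), ?_, ?_, ?_, ?_⟩
      · simp at hq1 hr1 ⊢
        omega
      · intro j hj
        cases j with
        | zero => simp
        | succ j =>
          rw [List.take_succ_cons, List.sum_cons]
          rcases le_or_gt j tq.length with hjt | hjt
          · rw [List.take_append_of_le_length hjt]
            have := hq2 (j + 1) (by simpa using hjt)
            rw [List.take_succ_cons, List.sum_cons] at this
            omega
          · rw [List.take_append,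
              List.take_of_length_le hjt.le]
            obtain ⟨j', hj'eq⟩ : ∃ j', j - tq.length = j' + 1 := ⟨j - tq.length - 1, by omega⟩
            rw [hj'eq, List.take_succ_cons]
            have hsq : a + tq.sum = tq.length + 1 := by simpa using hq1
            have hj' : j' ≤ lr.length := by
              simp at hj; omega
            have := hr2 j' hj'
            simp only [List.sum_cons, List.sum_append]
            omega
      · simp at hq3 ⊢
        omega
      · rw [htoList, ← hq4, ← hr4]
        show List.replicate (a + 1) U ++ D :: gw (tq ++ 0 :: lr) = _
        rw [gw_append]
        show _ = U :: (List.replicate a U ++ D :: gw tq) ++ D :: gw lr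
        simp [gw, List.replicate_succ]
termination_by p.semilength
decreasing_by
  exacts [p.semilength_insidePart_lt hp, p.semilength_outsidePart_lt hp]


/-- The predicate on lists corresponding to Dyck sequences. -/
def DSeq (l : List ℕ) : Prop :=
  l.sum = l.length ∧ ∀ j ≤ l.length, j ≤ (l.take j).sum

/-- The Dyck word associated to a `DSeq` list. -/
def dw (l : List ℕ) (h : DSeq l) : DyckWord where
  toList := gw l
  count_U_eq_count_D := by rw [count_U_gw, count_D_gw, h.1]
  count_D_le_count_U i := by simpa using gw_prefix l 0 (by simpa using h.2) i

lemma dw_semilength (l : List ℕ) (h : DSeq l) : (dw l h).semilength = l.length := by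
  rw [DyckWord.semilength]
  show (gw l).count U = _
  rw [count_U_gw, h.1]

/-- The list associated to a Dyck sequence. -/
def tl {k : ℕ} (t : Fin (k + 1) → ℕ) : List ℕ :=
  (t 0 - 1) :: List.ofFn (fun i : Fin k => t i.succ)

lemma tl_length {k : ℕ} (t : Fin (k + 1) → ℕ) : (tl t).length = k + 1 := by
  simp [tl]

lemma ofFn_eq_cons {k : ℕ} (t : Fin (k + 1) → ℕ) :
    List.ofFn t = t 0 :: List.ofFn (fun i : Fin k => t i.succ) := by
  rw [List.ofFn_succ]

lemma sum_filter_lt {k : ℕ} (t : Fin (k + 1) → ℕ) (j : ℕ) :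
    (∑ i ∈ Finset.univ.filter (fun i : Fin (k + 1) => (i : ℕ) < j), t i)
      = ((List.ofFn t).take j).sum := by
  rw [List.sum_take_ofFn]

lemma sum_take_tl {k : ℕ} (t : Fin (k + 1) → ℕ) (ht : 1 ≤ t 0) {j : ℕ} (hj : 1 ≤ j) :
    ((List.ofFn t).take j).sum = ((tl t).take j).sum + 1 := by
  obtain ⟨j', rfl⟩ : ∃ j', j = j' + 1 := ⟨j - 1, by omega⟩
  rw [ofFn_eq_cons, tl, List.take_succ_cons, List.take_succ_cons, List.sum_cons, List.sum_cons]
  omega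

lemma dyckseq_t0 {k : ℕ} {t : Fin (k + 1) → ℕ} (h : IsDyckSeq (k + 1) t) : 2 ≤ t 0 := by
  rcases Nat.eq_zero_or_pos k with rfl | hk
  · have := h.1
    simp [Fin.sum_univ_succ] at this
    omega
  · have h1 := h.2 1 le_rfl (by omega)
    have : (∑ i ∈ Finset.univ.filter (fun i : Fin (k + 1) => (i : ℕ) < 1), t i) = t 0 := by
      rw [sum_filter_lt, ofFn_eq_cons]
      simp
    rw [this] at h1
    by_contra hc
    have : t 0 ≤ 1 := by omega
    nlinarith

lemma dyckseq_iff_partial {k : ℕ} {t : Fin (k + 1) → ℕ} (h : IsDyckSeq (k + 1) t) :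
    ∀ j, 1 ≤ j → j ≤ k → j + 1 ≤ ((List.ofFn t).take j).sum := by
  intro j h1 h2
  have := h.2 j h1 (by omega)
  rw [sum_filter_lt] at this
  by_contra hc
  have hle : ((List.ofFn t).take j).sum ≤ j := by omega
  have : (k + 1) * ((List.ofFn t).take j).sum ≤ (k + 1) * j := Nat.mul_le_mul_left _ hle
  have h3 : (k + 1) * j < (k + 1 + 1) * j := by
    have : 0 < j := h1
    nlinarith
  omega

lemma dseq_of_dyckseq {k : ℕ} {t : Fin (k + 1) → ℕ} (h : IsDyckSeq (k + 1) t) : DSeq (tl t) := by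
  have ht0 := dyckseq_t0 h
  have hsum : (List.ofFn t).sum = k + 2 := by
    rw [List.sum_ofFn]
    exact h.1
  have htl_sum : (tl t).sum = k + 1 := by
    have : (List.ofFn t).sum = (tl t).sum + 1 := by
      rw [ofFn_eq_cons, tl, List.sum_cons, List.sum_cons]
      omega
    omega
  constructor
  · rw [htl_sum, tl_length]
  · intro j hj
    rcases Nat.eq_zero_or_pos j with rfl | hj1
    · simp
    rw [tl_length] at hj
    rcases eq_or_lt_of_le hj with rfl | hjk
    · rw [List.take_of_length_le (by rw [tl_length]), htl_sum]
    · have hjk' : j ≤ k := by omega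
      have := dyckseq_iff_partial h j hj1 hjk'
      rw [sum_take_tl t (by omega) hj1] at this
      omega

/-- Reconstruct a Dyck sequence from a list. -/
def tf {k : ℕ} (l : List ℕ) : Fin (k + 1) → ℕ :=
  fun i => if (i : ℕ) = 0 then l.headI + 1 else l.getD (i : ℕ) 0

lemma tl_tf {k : ℕ} (l : List ℕ) (hl : l.length = k + 1) : tl (tf (k := k) l) = l := by
  obtain ⟨a, l', rfl⟩ : ∃ a l', l = a :: l' := by
    cases l with
    | nil => simp at hl
    | cons a l' => exact ⟨a, l', rfl⟩
  rw [tl]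
  have h0 : tf (k := k) (a :: l') 0 = a + 1 := by simp [tf]
  rw [h0]
  simp only [Nat.add_sub_cancel]
  congr 1
  apply List.ext_getElem
  · simp at hl ⊢
    omega
  · intro i h1 h2
    simp only [List.getElem_ofFn]
    have : tf (k := k) (a :: l') (⟨i, by simp at h1; omega⟩ : Fin k).succ = l'.getD (i + 1 - 1) 0 := by
      simp [tf]
    rw [this]
    simp only [Nat.add_sub_cancel]
    rw [List.getD_eq_getElem _ _ (by simpa using h2)]

lemma dyckseq_of_dseq {k : ℕ} {l : List ℕ} (h : DSeq l) (hl : l.length = k + 1) :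
    IsDyckSeq (k + 1) (tf (k := k) l) := by
  set t := tf (k := k) l with ht
  have htl := tl_tf l hl
  have ht0 : 1 ≤ t 0 := by simp [ht, tf]
  have hofn : ∀ j, 1 ≤ j → ((List.ofFn t).take j).sum = ((l.take j).sum) + 1 := by
    intro j hj
    rw [sum_take_tl t ht0 hj, htl]
  constructor
  · have : (List.ofFn t).sum = l.sum + 1 := by
      have := hofn (k + 1) (by omega)
      rw [List.take_of_length_le (by simp), List.take_of_length_le (by omega)] at this
      exact this
    rw [List.sum_ofFn] at this
    rw [this, h.1, hl]
  · intro j h1 h2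
    rw [sum_filter_lt, hofn j h1]
    have hjk : j ≤ k := by omega
    have := h.2 j (by omega)
    have hge : j + 1 ≤ (l.take j).sum + 1 := by omega
    calc (k + 1 + 1) * j < (k + 1) * (j + 1) := by nlinarith
    _ ≤ (k + 1) * ((l.take j).sum + 1) := Nat.mul_le_mul_left _ hge

/-- The explicit equivalence between Dyck sequences and Dyck words. -/
noncomputable def dyckSeqEquiv (k : ℕ) :
    {t : Fin (k + 1) → ℕ // IsDyckSeq (k + 1) t} ≃ {p : DyckWord // p.semilength = k + 1} := by
  apply Equiv.ofBijective
    (fun t => ⟨dw (tl t.1) (dseq_of_dyckseq t.2), by rw [dw_semilength, tl_length]⟩)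
  constructor
  · rintro ⟨t, ht⟩ ⟨t', ht'⟩ hEq
    simp only [Subtype.mk.injEq] at hEq ⊢
    have : gw (tl t) = gw (tl t') := congrArg DyckWord.toList hEq
    have htl : tl t = tl t' := gw_inj this
    have h0 := dyckseq_t0 ht
    have h0' := dyckseq_t0 ht'
    rw [tl, tl, List.cons.injEq] at htl
    funext i
    rcases Fin.eq_zero_or_eq_succ i with rfl | ⟨i', rfl⟩
    · omega
    · have := List.ofFn_injective htl.2
      exact congrFun this i'
  · rintro ⟨p, hp⟩
    obtain ⟨l, h1, h2, h3, h4⟩ := gw_surj p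
    have hl : l.length = k + 1 := by rw [h3, hp]
    refine ⟨⟨tf (k := k) l, dyckseq_of_dseq ⟨h1, h2⟩ hl⟩, ?_⟩
    simp only [Subtype.mk.injEq]
    apply DyckWord.ext
    show gw (tl (tf (k := k) l)) = p.toList
    rw [tl_tf l hl, h4]

end NC12Aux


namespace NC12Aux
open Finset

/-- The configuration condition over `ℕ`. -/
def Cond (F : Finset (Finset ℕ)) : Prop :=
  (∀ a ∈ F, a.card = 1 ∨ a.card = 2) ∧
    (∀ a ∈ F, ∀ b ∈ F, a ≠ b → Disjoint a b) ∧
    ¬ ∃ i1 i2 j1 j2 : ℕ, ({i1, i2} : Finset ℕ) ∈ F ∧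
        ({j1, j2} : Finset ℕ) ∈ F ∧ i1 < j1 ∧ j1 < i2 ∧ i2 < j2

lemma cond_mono {F F' : Finset (Finset ℕ)} (h : F' ⊆ F) (hC : Cond F) : Cond F' := by
  refine ⟨fun a ha => hC.1 a (h ha), fun a ha b hb hab => hC.2.1 a (h ha) b (h hb) hab, ?_⟩
  rintro ⟨i1, i2, j1, j2, h1, h2, h3⟩
  exact hC.2.2 ⟨i1, i2, j1, j2, h h1, h h2, h3⟩

/-- Noncrossing configurations with ground set `s`. -/
noncomputable def NCF (s : Finset ℕ) : Finset (Finset (Finset ℕ)) :=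
  @Finset.filter _ Cond (Classical.decPred _) s.powerset.powerset

lemma mem_NCF {s : Finset ℕ} {F : Finset (Finset ℕ)} :
    F ∈ NCF s ↔ (∀ a ∈ F, a ⊆ s) ∧ Cond F := by
  simp only [NCF, Finset.mem_filter, Finset.mem_powerset]
  constructor
  · rintro ⟨h1, h2⟩
    exact ⟨fun a ha => Finset.mem_powerset.mp (h1 ha), h2⟩
  · rintro ⟨h1, h2⟩
    exact ⟨fun a ha => Finset.mem_powerset.mpr (h1 a ha), h2⟩

lemma NCF_mono {s s' : Finset ℕ} (h : s ⊆ s') : NCF s ⊆ NCF s' := by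
  intro F hF
  rw [mem_NCF] at hF ⊢
  exact ⟨fun a ha => (hF.1 a ha).trans h, hF.2⟩

lemma mem_pair {x a b : ℕ} : x ∈ ({a, b} : Finset ℕ) ↔ x = a ∨ x = b := by
  simp

lemma pair_eq_pair {i1 i2 m j : ℕ} (h : ({i1, i2} : Finset ℕ) = {m, j})
    (h12 : i1 < i2) (hmj : m < j) : i1 = m ∧ i2 = j := by
  have hi1 : i1 = m ∨ i1 = j := by rw [← mem_pair, ← h]; simp
  have hi2 : i2 = m ∨ i2 = j := by rw [← mem_pair, ← h]; simp
  have hm : m = i1 ∨ m = i2 := by rw [← mem_pair (a := i1) (b := i2), h]; simp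
  omega

lemma pair_eq_singleton {i1 i2 m : ℕ} (h : ({i1, i2} : Finset ℕ) = {m}) : i1 = m ∧ i2 = m := by
  constructor
  · have : i1 ∈ ({m} : Finset ℕ) := by rw [← h]; simp
    simpa using this
  · have : i2 ∈ ({m} : Finset ℕ) := by rw [← h]; simp
    simpa using this

section Decomp

variable {s : Finset ℕ} (hne : s.Nonempty)

/-- Structural lemma: all members of a configuration containing the arc `{min, j}`
other than that arc lie entirely between `min` and `j` or entirely above `j`. -/
lemma split_mem {j : ℕ} (hj : j ∈ s) (hmj : s.min' hne < j) {F : Finset (Finset ℕ)}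
    (hF : F ∈ NCF s) (hFj : ({s.min' hne, j} : Finset ℕ) ∈ F) {a : Finset ℕ}
    (ha : a ∈ F) (hane : a ≠ {s.min' hne, j}) :
    a ⊆ s.filter (fun x => s.min' hne < x ∧ x < j) ∨ a ⊆ s.filter (fun x => j < x) := by
  set m := s.min' hne with hm
  obtain ⟨hsub, hC⟩ := mem_NCF.mp hF
  have hdisj : Disjoint a ({m, j} : Finset ℕ) := hC.2.1 a ha _ hFj hane
  have hma : m ∉ a := fun hmem => (Finset.disjoint_left.mp hdisj hmem) (by simp)
  have hja : j ∉ a := fun hmem => (Finset.disjoint_left.mp hdisj hmem) (by simp)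
  have helem : ∀ x ∈ a, m < x ∧ x ≠ j := by
    intro x hx
    have hxs : x ∈ s := hsub a ha hx
    have := s.min'_le x hxs
    constructor
    · rcases eq_or_lt_of_le this with heq | hlt
      · have hmx : m = x := heq
        exact absurd hx (hmx ▸ hma)
      · exact hlt
    · exact fun h => hja (h ▸ hx)
  rcases hC.1 a ha with h1 | h2
  · obtain ⟨x, rfl⟩ := Finset.card_eq_one.mp h1
    have hx := helem x (by simp)
    rcases lt_or_gt_of_ne hx.2 with hlt | hgt
    · left; intro y hy; simp at hy; subst hy
      simp [Finset.mem_filter]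
      exact ⟨hsub _ ha (by simp), hx.1, hlt⟩
    · right; intro y hy; simp at hy; subst hy
      simp [Finset.mem_filter]
      exact ⟨hsub _ ha (by simp), hgt⟩
  · obtain ⟨x, y, hxy, rfl⟩ := Finset.card_eq_two.mp h2
    -- wlog x < y
    rcases lt_or_gt_of_ne hxy with hlt | hgt
    ·
      have hx := helem x (by simp)
      have hy' := helem y (by simp)
      -- x < y; cannot have x < j < y
      have hnc : ¬(x < j ∧ j < y) := by
        rintro ⟨hxj, hjy⟩
        exact hC.2.2 ⟨m, j, x, y, hFj, ha, hx.1, hxj, hjy⟩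
      rcases lt_or_gt_of_ne hx.2 with hxj | hxj
      · -- x < j, so y < j too
        have hyj : y < j := by
          rcases lt_or_gt_of_ne hy'.2 with h | h
          · exact h
          · exact absurd ⟨hxj, h⟩ hnc
        left
        intro z hz
        rw [mem_pair] at hz
        simp only [Finset.mem_filter]
        rcases hz with rfl | rfl
        · exact ⟨hsub _ ha (by simp), hx.1, hxj⟩
        · exact ⟨hsub _ ha (by simp), hy'.1, hyj⟩
      · -- j < x, so j < y
        right
        intro z hz
        rw [mem_pair] at hz
        simp only [Finset.mem_filter]
        rcases hz with rfl | rfl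
        · exact ⟨hsub _ ha (by simp), hxj⟩
        · exact ⟨hsub _ ha (by simp), hxj.trans hlt⟩
    ·
      -- symmetric: swap roles of x and y using pair commutativity
      have hpair : ({x, y} : Finset ℕ) = {y, x} := Finset.pair_comm x y
      have hx := helem x (by simp)
      have hy' := helem y (by simp)
      have hnc : ¬(y < j ∧ j < x) := by
        rintro ⟨hyj, hjx⟩
        exact hC.2.2 ⟨m, j, y, x, hFj, hpair ▸ ha, hy'.1, hyj, hjx⟩
      rcases lt_or_gt_of_ne hy'.2 with hyj | hyj
      · have hxj : x < j := by
          rcases lt_or_gt_of_ne hx.2 with h | h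
          · exact h
          · exact absurd ⟨hyj, h⟩ hnc
        left
        intro z hz
        rw [mem_pair] at hz
        simp only [Finset.mem_filter]
        rcases hz with rfl | rfl
        · exact ⟨hsub _ ha (by simp), hx.1, hxj⟩
        · exact ⟨hsub _ ha (by simp), hy'.1, hyj⟩
      · right
        intro z hz
        rw [mem_pair] at hz
        simp only [Finset.mem_filter]
        rcases hz with rfl | rfl
        · exact ⟨hsub _ ha (by simp), hyj.trans hgt⟩
        · exact ⟨hsub _ ha (by simp), hyj⟩

end Decomp

end NC12Aux

namespace NC12Aux
open Finset

lemma NCF_empty : NCF ∅ = {∅} := by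
  ext F
  rw [mem_NCF, Finset.mem_singleton]
  constructor
  · rintro ⟨h1, h2⟩
    rcases Finset.eq_empty_or_nonempty F with rfl | ⟨a, ha⟩
    · rfl
    · have := h1 a ha
      have ha0 : a = ∅ := Finset.subset_empty.mp this
      rcases h2.1 a ha with h | h <;> simp [ha0] at h
  · rintro rfl
    exact ⟨by simp, by simp, by simp, by rintro ⟨_, _, _, _, h, _⟩; simp at h⟩

lemma ball_cond {s : Finset ℕ} {m : ℕ} (hm : m ∈ s) {G : Finset (Finset ℕ)}
    (hG : G ∈ NCF (s.erase m)) : insert ({m} : Finset ℕ) G ∈ NCF s := by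
  obtain ⟨hsub, hC⟩ := mem_NCF.mp hG
  have hnm : ∀ a ∈ G, m ∉ a := by
    intro a ha hma
    have := hsub a ha hma
    simp at this
  rw [mem_NCF]
  refine ⟨?_, ?_, ?_, ?_⟩
  · intro a ha
    rcases Finset.mem_insert.mp ha with rfl | h
    · simpa using hm
    · exact (hsub a h).trans (Finset.erase_subset _ _)
  · intro a ha
    rcases Finset.mem_insert.mp ha with rfl | h
    · left; simp
    · exact hC.1 a h
  · intro a ha b hb hab
    rcases Finset.mem_insert.mp ha with rfl | ha' <;>
      rcases Finset.mem_insert.mp hb with rfl | hb'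
    · exact absurd rfl hab
    · simpa [Finset.disjoint_singleton_left] using hnm b hb'
    · simpa [Finset.disjoint_singleton_right] using hnm a ha'
    · exact hC.2.1 a ha' b hb' hab
  · rintro ⟨i1, i2, j1, j2, h1, h2, hlt1, hlt2, hlt3⟩
    rcases Finset.mem_insert.mp h1 with he1 | h1'
    · obtain ⟨rfl, rfl⟩ := pair_eq_singleton he1
      omega
    · rcases Finset.mem_insert.mp h2 with he2 | h2'
      · obtain ⟨rfl, rfl⟩ := pair_eq_singleton he2
        omega
      · exact hC.2.2 ⟨i1, i2, j1, j2, h1', h2', hlt1, hlt2, hlt3⟩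

lemma TB_card {s : Finset ℕ} {m : ℕ} (hm : m ∈ s) :
    ((NCF s).filter (fun F => ({m} : Finset ℕ) ∈ F)).card = (NCF (s.erase m)).card := by
  refine Finset.card_bij' (fun F _ => F.erase {m}) (fun G _ => insert ({m} : Finset ℕ) G)
    ?_ ?_ ?_ ?_
  · intro F hF
    rw [Finset.mem_filter] at hF
    obtain ⟨hFs, hmF⟩ := hF
    obtain ⟨hsub, hC⟩ := mem_NCF.mp hFs
    rw [mem_NCF]
    refine ⟨?_, cond_mono (Finset.erase_subset _ _) hC⟩
    intro a ha
    rw [Finset.mem_erase] at ha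
    obtain ⟨hane, haF⟩ := ha
    have hdisj := hC.2.1 a haF _ hmF hane
    intro x hx
    rw [Finset.mem_erase]
    refine ⟨?_, hsub a haF hx⟩
    intro hxm
    exact (Finset.disjoint_left.mp hdisj hx) (by simp [hxm])
  · intro G hG
    rw [Finset.mem_filter]
    exact ⟨ball_cond hm hG, Finset.mem_insert_self _ _⟩
  · intro F hF
    rw [Finset.mem_filter] at hF
    exact Finset.insert_erase hF.2
  · intro G hG
    apply Finset.erase_insert
    intro hmG
    have := (mem_NCF.mp hG).1 _ hmG
    simp at this

end NC12Aux

namespace NC12Aux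
open Finset

section Arc

variable {s : Finset ℕ} (hne : s.Nonempty) {j : ℕ}

/-- Inserting the arc `{min s, j}` into a union of a configuration strictly between
`min s` and `j` and one strictly above `j` yields a configuration on `s`. -/
lemma arc_cond (hj : j ∈ s) (hmj : s.min' hne < j) {G1 G2 : Finset (Finset ℕ)}
    (hG1 : G1 ∈ NCF (s.filter (fun x => s.min' hne < x ∧ x < j)))
    (hG2 : G2 ∈ NCF (s.filter (fun x => j < x))) :
    insert ({s.min' hne, j} : Finset ℕ) (G1 ∪ G2) ∈ NCF s := by
  set m := s.min' hne with hm
  obtain ⟨hsub1, hC1⟩ := mem_NCF.mp hG1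
  obtain ⟨hsub2, hC2⟩ := mem_NCF.mp hG2
  have hmem1 : ∀ a ∈ G1, ∀ x ∈ a, x ∈ s ∧ m < x ∧ x < j := by
    intro a ha x hx
    have := hsub1 a ha hx
    rw [Finset.mem_filter] at this
    exact ⟨this.1, this.2.1, this.2.2⟩
  have hmem2 : ∀ a ∈ G2, ∀ x ∈ a, x ∈ s ∧ j < x := by
    intro a ha x hx
    have := hsub2 a ha hx
    rw [Finset.mem_filter] at this
    exact this
  have hmemU : ∀ a ∈ G1 ∪ G2, ∀ x ∈ a, x ∈ s ∧ m < x ∧ x ≠ j := by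
    intro a ha x hx
    rcases Finset.mem_union.mp ha with h | h
    · have := hmem1 a h x hx; exact ⟨this.1, this.2.1, by omega⟩
    · have := hmem2 a h x hx; exact ⟨this.1, by omega, by omega⟩
  rw [mem_NCF]
  refine ⟨?_, ?_, ?_, ?_⟩
  · intro a ha
    rcases Finset.mem_insert.mp ha with rfl | h
    · intro x hx
      rcases mem_pair.mp hx with rfl | rfl
      · exact s.min'_mem hne
      · exact hj
    · exact fun x hx => (hmemU a h x hx).1
  · intro a ha
    rcases Finset.mem_insert.mp ha with rfl | h
    · right; exact Finset.card_pair (by omega)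
    · rcases Finset.mem_union.mp h with h' | h'
      · exact hC1.1 a h'
      · exact hC2.1 a h'
  · intro a ha b hb hab
    rcases Finset.mem_insert.mp ha with rfl | ha' <;>
      rcases Finset.mem_insert.mp hb with rfl | hb'
    · exact absurd rfl hab
    · rw [Finset.disjoint_left]
      intro x hx hxb
      have := hmemU b hb' x hxb
      rcases mem_pair.mp hx with rfl | rfl <;> omega
    · rw [Finset.disjoint_right]
      intro x hx hxa
      have := hmemU a ha' x hxa
      rcases mem_pair.mp hx with rfl | rfl <;> omega
    · rcases Finset.mem_union.mp ha' with h1 | h1 <;> rcases Finset.mem_union.mp hb' with h2 | h2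
      · exact hC1.2.1 a h1 b h2 hab
      · rw [Finset.disjoint_left]
        intro x hxa hxb
        have := hmem1 a h1 x hxa
        have := hmem2 b h2 x hxb
        omega
      · rw [Finset.disjoint_left]
        intro x hxa hxb
        have := hmem2 a h1 x hxa
        have := hmem1 b h2 x hxb
        omega
      · exact hC2.2.1 a h1 b h2 hab
  · rintro ⟨i1, i2, j1, j2, h1, h2, hlt1, hlt2, hlt3⟩
    rcases Finset.mem_insert.mp h1 with he1 | h1'
    · obtain ⟨rfl, rfl⟩ := pair_eq_pair he1 (by omega) hmj
      -- {j1, j2} with m < j1 < j < j2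
      rcases Finset.mem_insert.mp h2 with he2 | h2'
      · obtain ⟨rfl, rfl⟩ := pair_eq_pair he2 (by omega) hmj
        omega
      · rcases Finset.mem_union.mp h2' with h | h
        · have := hmem1 _ h j2 (by simp)
          omega
        · have := hmem2 _ h j1 (by simp)
          omega
    · rcases Finset.mem_insert.mp h2 with he2 | h2'
      · obtain ⟨rfl, rfl⟩ := pair_eq_pair he2 (by omega) hmj
        have := hmemU _ h1' i1 (by simp)
        omega
      · rcases Finset.mem_union.mp h1' with h1'' | h1'' <;>
          rcases Finset.mem_union.mp h2' with h2'' | h2''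
        · exact hC1.2.2 ⟨i1, i2, j1, j2, h1'', h2'', hlt1, hlt2, hlt3⟩
        · have := hmem1 _ h1'' i2 (by simp)
          have := hmem2 _ h2'' j1 (by simp)
          omega
        · have := hmem2 _ h1'' i1 (by simp)
          have := hmem1 _ h2'' j1 (by simp)
          omega
        · exact hC2.2.2 ⟨i1, i2, j1, j2, h1'', h2'', hlt1, hlt2, hlt3⟩

lemma TJ_card (hj : j ∈ s) (hmj : s.min' hne < j) :
    ((NCF s).filter (fun F => ({s.min' hne, j} : Finset ℕ) ∈ F)).card
      = (NCF (s.filter (fun x => s.min' hne < x ∧ x < j))).card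
          * (NCF (s.filter (fun x => j < x))).card := by
  set m := s.min' hne with hm
  set Bt := s.filter (fun x => m < x ∧ x < j) with hBt
  set Ab := s.filter (fun x => j < x) with hAb
  rw [← Finset.card_product]
  refine Finset.card_bij'
    (fun F _ => (F.filter (fun a => a ⊆ Bt), F.filter (fun a => a ⊆ Ab)))
    (fun G _ => insert ({m, j} : Finset ℕ) (G.1 ∪ G.2)) ?_ ?_ ?_ ?_
  · intro F hF
    rw [Finset.mem_filter] at hF
    obtain ⟨hFs, hmF⟩ := hF
    obtain ⟨hsub, hC⟩ := mem_NCF.mp hFs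
    rw [Finset.mem_product]
    constructor
    · rw [mem_NCF]
      exact ⟨fun a ha => (Finset.mem_filter.mp ha).2,
        cond_mono (Finset.filter_subset _ _) hC⟩
    · rw [mem_NCF]
      exact ⟨fun a ha => (Finset.mem_filter.mp ha).2,
        cond_mono (Finset.filter_subset _ _) hC⟩
  · intro G hG
    rw [Finset.mem_product] at hG
    rw [Finset.mem_filter]
    exact ⟨arc_cond hne hj hmj hG.1 hG.2, Finset.mem_insert_self _ _⟩
  · -- left inverse: reassembling the filters gives back F
    intro F hF
    rw [Finset.mem_filter] at hF
    obtain ⟨hFs, hmF⟩ := hF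
    ext a
    simp only [Finset.mem_insert, Finset.mem_union, Finset.mem_filter]
    constructor
    · rintro (rfl | ⟨ha, _⟩ | ⟨ha, _⟩) <;> first | exact hmF | exact ha
    · intro ha
      by_cases hane : a = ({m, j} : Finset ℕ)
      · left; exact hane
      · rcases split_mem hne hj hmj hFs hmF ha hane with h | h
        · right; left; exact ⟨ha, h⟩
        · right; right; exact ⟨ha, h⟩
  · -- right inverse: filtering the assembled family recovers G1, G2
    intro G hG
    rw [Finset.mem_product] at hG
    obtain ⟨hG1, hG2⟩ := hG
    obtain ⟨hsub1, hC1⟩ := mem_NCF.mp hG1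
    obtain ⟨hsub2, hC2⟩ := mem_NCF.mp hG2
    have hmj' : ({m, j} : Finset ℕ) ⊆ Bt → False := by
      intro h
      have := h (Finset.mem_insert_self m {j})
      rw [hBt, Finset.mem_filter] at this
      omega
    have hmj'' : ({m, j} : Finset ℕ) ⊆ Ab → False := by
      intro h
      have := h (by simp : j ∈ ({m, j} : Finset ℕ))
      rw [hAb, Finset.mem_filter] at this
      omega
    have hdisjBA : ∀ a : Finset ℕ, a.Nonempty → a ⊆ Bt → a ⊆ Ab → False := by
      rintro a ⟨x, hx⟩ h1 h2
      have ha1 := Finset.mem_filter.mp (h1 hx)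
      have ha2 := Finset.mem_filter.mp (h2 hx)
      omega
    have hne1 : ∀ a ∈ G.1, a.Nonempty := by
      intro a ha
      rcases hC1.1 a ha with h | h <;>
        · apply Finset.card_pos.mp; omega
    have hne2 : ∀ a ∈ G.2, a.Nonempty := by
      intro a ha
      rcases hC2.1 a ha with h | h <;>
        · apply Finset.card_pos.mp; omega
    have e1 : (insert ({m, j} : Finset ℕ) (G.1 ∪ G.2)).filter (fun a => a ⊆ Bt) = G.1 := by
      ext a
      simp only [Finset.mem_filter, Finset.mem_insert, Finset.mem_union]
      constructor
      · rintro ⟨rfl | h | h, hsub⟩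
        · exact absurd hsub hmj'
        · exact h
        · exact absurd hsub (fun hs => hdisjBA a (hne2 a h) hs (hsub2 a h))
      · intro ha
        exact ⟨Or.inr (Or.inl ha), hsub1 a ha⟩
    have e2 : (insert ({m, j} : Finset ℕ) (G.1 ∪ G.2)).filter (fun a => a ⊆ Ab) = G.2 := by
      ext a
      simp only [Finset.mem_filter, Finset.mem_insert, Finset.mem_union]
      constructor
      · rintro ⟨rfl | h | h, hsub⟩
        · exact absurd hsub hmj''
        · exact absurd (hsub1 a h) (fun hs => hdisjBA a (hne1 a h) hs hsub)
        · exact h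
      · intro ha
        exact ⟨Or.inr (Or.inr ha), hsub2 a ha⟩
    rw [Prod.ext_iff]
    exact ⟨e1, e2⟩

end Arc

end NC12Aux

namespace NC12Aux
open Finset

lemma catalan_split {M : ℕ} (hM : 1 ≤ M) :
    catalan (M + 1)
      = catalan M + catalan M + ∑ r ∈ Finset.Ico 1 M, catalan r * catalan (M - r) := by
  obtain ⟨M', rfl⟩ : ∃ M', M = M' + 1 := ⟨M - 1, by omega⟩
  rw [catalan_succ, ← Finset.sum_range (f := fun i => catalan i * catalan (M' + 1 - i)),
    Finset.sum_range_succ, Finset.sum_range_succ']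
  have h1 : ∑ r ∈ Finset.Ico 1 (M' + 1), catalan r * catalan (M' + 1 - r)
      = ∑ i ∈ Finset.range M', catalan (1 + i) * catalan (M' + 1 - (1 + i)) := by
    rw [Finset.sum_Ico_eq_sum_range]
    simp
  rw [h1]
  have h2 : ∀ i, catalan (i + 1) * catalan (M' + 1 - (i + 1))
      = catalan (1 + i) * catalan (M' + 1 - (1 + i)) := by
    intro i
    rw [add_comm i 1]
  simp only [h2, Nat.sub_self, catalan_zero, Nat.sub_zero, mul_one, one_mul]
  ring

lemma sum_rank {s : Finset ℕ} (hne : s.Nonempty) (f : ℕ → ℕ) :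
    ∑ j ∈ s.filter (fun x => s.min' hne < x), f ((s.filter (· < j)).card)
      = ∑ r ∈ Finset.Ico 1 s.card, f r := by
  set m := s.min' hne with hm
  have hfilter_eq : s.filter (fun x => m < x) = s.erase m := by
    ext x
    rw [Finset.mem_filter, Finset.mem_erase]
    constructor
    · rintro ⟨h1, h2⟩; exact ⟨by omega, h1⟩
    · rintro ⟨h1, h2⟩
      exact ⟨h2, lt_of_le_of_ne (s.min'_le x h2) (Ne.symm h1)⟩
  have hcard' : (s.filter (fun x => m < x)).card = s.card - 1 := by
    rw [hfilter_eq, Finset.card_erase_of_mem (s.min'_mem hne)]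
  have hmaps : ∀ j ∈ s.filter (fun x => m < x), (s.filter (· < j)).card ∈ Finset.Ico 1 s.card := by
    intro j hj
    rw [Finset.mem_filter] at hj
    rw [Finset.mem_Ico]
    constructor
    · apply Finset.card_pos.mpr
      exact ⟨m, Finset.mem_filter.mpr ⟨s.min'_mem hne, hj.2⟩⟩
    · apply Finset.card_lt_card
      rw [Finset.ssubset_iff_of_subset (Finset.filter_subset _ s)]
      exact ⟨j, hj.1, by simp⟩
  have hinj : ∀ j1 ∈ s.filter (fun x => m < x), ∀ j2 ∈ s.filter (fun x => m < x),
      (s.filter (· < j1)).card = (s.filter (· < j2)).card → j1 = j2 := by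
    have key : ∀ j1 j2, j1 ∈ s → j2 ∈ s → j1 < j2 →
        (s.filter (· < j1)).card < (s.filter (· < j2)).card := by
      intro j1 j2 h1 h2 hlt
      apply Finset.card_lt_card
      constructor
      · intro x hx
        rw [Finset.mem_filter] at hx ⊢
        exact ⟨hx.1, by omega⟩
      · intro hsub
        have := hsub (Finset.mem_filter.mpr ⟨h1, hlt⟩ : j1 ∈ s.filter (· < j2))
        rw [Finset.mem_filter] at this
        omega
    intro j1 hj1 j2 hj2 heq
    rw [Finset.mem_filter] at hj1 hj2
    rcases lt_trichotomy j1 j2 with h | h | h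
    · have := key j1 j2 hj1.1 hj2.1 h; omega
    · exact h
    · have := key j2 j1 hj2.1 hj1.1 h; omega
  apply Finset.sum_bij (i := fun j _ => (s.filter (· < j)).card) hmaps
    (fun j1 h1 j2 h2 => hinj j1 h1 j2 h2)
  · intro r hr
    have hcard_le : (Finset.Ico 1 s.card).card ≤ (s.filter (fun x => m < x)).card := by
      rw [Nat.card_Ico, hcard']
    have := Finset.surj_on_of_inj_on_of_card_le
      (s := s.filter (fun x => m < x)) (t := Finset.Ico 1 s.card)
      (fun j _ => (s.filter (· < j)).card) hmaps
      (fun j1 j2 h1 h2 h => hinj j1 h1 j2 h2 h) hcard_le r hr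
    obtain ⟨j, hj, hjr⟩ := this
    exact ⟨j, hj, hjr.symm⟩
  · intro j hj
    rfl

theorem NCF_card_cat : ∀ N : ℕ, ∀ s : Finset ℕ, s.card = N → (NCF s).card = catalan (N + 1) := by
  intro N
  induction N using Nat.strong_induction_on with
  | _ N ih =>
  intro s hsN
  rcases Finset.eq_empty_or_nonempty s with rfl | hne
  · simp at hsN
    subst hsN
    rw [NCF_empty]
    simp
  set m := s.min' hne with hm
  have hm_mem : m ∈ s := s.min'_mem hne
  have hN : 1 ≤ N := by rw [← hsN]; exact Finset.card_pos.mpr hne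
  have hcard_erase : (s.erase m).card = N - 1 := by
    rw [Finset.card_erase_of_mem hm_mem, hsN]
  have hpart : NCF s =
      (NCF (s.erase m) ∪ (NCF s).filter (fun F => ({m} : Finset ℕ) ∈ F))
        ∪ (s.filter (fun x => m < x)).biUnion
            (fun j => (NCF s).filter (fun F => ({m, j} : Finset ℕ) ∈ F)) := by
    ext F
    constructor
    · intro hF
      obtain ⟨hsub, hC⟩ := mem_NCF.mp hF
      by_cases hc : ∃ a ∈ F, m ∈ a
      · obtain ⟨a, haF, hma⟩ := hc
        rcases hC.1 a haF with h1 | h2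
        · obtain ⟨x, rfl⟩ := Finset.card_eq_one.mp h1
          have hmx : m = x := by simpa using hma
          subst hmx
          exact Finset.mem_union_left _
            (Finset.mem_union_right _ (Finset.mem_filter.mpr ⟨hF, haF⟩))
        · obtain ⟨x, y, hxy, rfl⟩ := Finset.card_eq_two.mp h2
          apply Finset.mem_union_right
          rw [Finset.mem_biUnion]
          rcases mem_pair.mp hma with rfl | rfl
          · refine ⟨y, ?_, ?_⟩
            · rw [Finset.mem_filter]
              have hy : y ∈ s := hsub _ haF (by simp)
              exact ⟨hy, lt_of_le_of_ne (s.min'_le y hy) hxy⟩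
            · rw [Finset.mem_filter]
              exact ⟨hF, haF⟩
          · refine ⟨x, ?_, ?_⟩
            · rw [Finset.mem_filter]
              have hx : x ∈ s := hsub _ haF (by simp)
              exact ⟨hx, lt_of_le_of_ne (s.min'_le x hx) (Ne.symm hxy)⟩
            · rw [Finset.mem_filter]
              rw [Finset.pair_comm x m] at haF
              exact ⟨hF, haF⟩
      · apply Finset.mem_union_left
        apply Finset.mem_union_left
        rw [mem_NCF]
        refine ⟨?_, hC⟩
        intro a ha x hx
        rw [Finset.mem_erase]
        exact ⟨fun h => hc ⟨a, ha, h ▸ hx⟩, hsub a ha hx⟩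
    · intro hF
      rcases Finset.mem_union.mp hF with h | h
      · rcases Finset.mem_union.mp h with h' | h'
        · exact NCF_mono (Finset.erase_subset _ _) h'
        · exact (Finset.mem_filter.mp h').1
      · obtain ⟨j, _, hFj⟩ := Finset.mem_biUnion.mp h
        exact (Finset.mem_filter.mp hFj).1
  have hd1 : Disjoint (NCF (s.erase m)) ((NCF s).filter (fun F => ({m} : Finset ℕ) ∈ F)) := by
    rw [Finset.disjoint_left]
    intro F h1 h2
    have := (mem_NCF.mp h1).1 _ (Finset.mem_filter.mp h2).2 (by simp : m ∈ ({m} : Finset ℕ))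
    simp at this
  have hd2 : Disjoint (NCF (s.erase m) ∪ (NCF s).filter (fun F => ({m} : Finset ℕ) ∈ F))
      ((s.filter (fun x => m < x)).biUnion
        (fun j => (NCF s).filter (fun F => ({m, j} : Finset ℕ) ∈ F))) := by
    rw [Finset.disjoint_left]
    intro F h1 h2
    obtain ⟨j, hj, hFj⟩ := Finset.mem_biUnion.mp h2
    rw [Finset.mem_filter] at hFj
    have hmj : m < j := (Finset.mem_filter.mp hj).2
    rcases Finset.mem_union.mp h1 with h' | h'
    · have := (mem_NCF.mp h').1 _ hFj.2 (by simp : m ∈ ({m, j} : Finset ℕ))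
      simp at this
    · have hC := (mem_NCF.mp hFj.1).2
      have hne' : ({m} : Finset ℕ) ≠ {m, j} := by
        intro h
        have : j ∈ ({m} : Finset ℕ) := h ▸ (by simp : j ∈ ({m, j} : Finset ℕ))
        simp at this
        omega
      have := hC.2.1 _ (Finset.mem_filter.mp h').2 _ hFj.2 hne'
      exact (Finset.disjoint_left.mp this (Finset.mem_singleton_self m))
        (Finset.mem_insert_self m {j})
  have hd3 : ∀ j1 ∈ s.filter (fun x => m < x), ∀ j2 ∈ s.filter (fun x => m < x), j1 ≠ j2 →
      Disjoint ((NCF s).filter (fun F => ({m, j1} : Finset ℕ) ∈ F))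
        ((NCF s).filter (fun F => ({m, j2} : Finset ℕ) ∈ F)) := by
    intro j1 hj1 j2 hj2 hne'
    rw [Finset.mem_filter] at hj1 hj2
    rw [Finset.disjoint_left]
    intro F h1 h2
    rw [Finset.mem_filter] at h1 h2
    have hC := (mem_NCF.mp h1.1).2
    have hpairne : ({m, j1} : Finset ℕ) ≠ {m, j2} := by
      intro h
      have : j1 ∈ ({m, j2} : Finset ℕ) := h ▸ (by simp : j1 ∈ ({m, j1} : Finset ℕ))
      rw [mem_pair] at this
      rcases this with h' | h'
      · omega
      · exact hne' h'
    have := hC.2.1 _ h1.2 _ h2.2 hpairne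
    exact (Finset.disjoint_left.mp this (Finset.mem_insert_self m {j1}))
      (Finset.mem_insert_self m {j2})
  rw [hpart, Finset.card_union_of_disjoint hd2, Finset.card_union_of_disjoint hd1,
    Finset.card_biUnion hd3, TB_card hm_mem, ih (N - 1) (by omega) _ hcard_erase]
  have hsum : ∀ j ∈ s.filter (fun x => m < x),
      ((NCF s).filter (fun F => ({m, j} : Finset ℕ) ∈ F)).card
        = catalan ((s.filter (· < j)).card) * catalan (N - (s.filter (· < j)).card) := by
    intro j hj
    rw [Finset.mem_filter] at hj
    have hmj : m < j := hj.2
    have hBtcard : (s.filter (fun x => m < x ∧ x < j)).card + 1 = (s.filter (· < j)).card := by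
      have hins : insert m (s.filter fun x => m < x ∧ x < j) = s.filter (· < j) := by
        ext x
        rw [Finset.mem_insert, Finset.mem_filter, Finset.mem_filter]
        constructor
        · rintro (rfl | ⟨h1, h2⟩)
          · exact ⟨hm_mem, hmj⟩
          · exact ⟨h1, h2.2⟩
        · rintro ⟨h1, h2⟩
          rcases eq_or_lt_of_le (s.min'_le x h1) with h | h
          · left; exact h.symm
          · right; exact ⟨h1, h, h2⟩
      rw [← hins, Finset.card_insert_of_notMem (by simp)]
    have hAbcard : (s.filter (· < j)).card + ((s.filter (fun x => j < x)).card + 1) = N := by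
      have hsplit : (s.filter (fun x => x < j)).card
          + (s.filter (fun x => ¬ x < j)).card = s.card := by
        simpa using Finset.card_filter_add_card_filter_not
          (s := s) (p := fun x => x < j)
      have hins : s.filter (fun x => ¬ x < j) = insert j (s.filter (fun x => j < x)) := by
        ext x
        rw [Finset.mem_filter, Finset.mem_insert, Finset.mem_filter]
        constructor
        · rintro ⟨h1, h2⟩
          rcases eq_or_lt_of_le (not_lt.mp h2) with h | h
          · left; exact h.symm
          · right; exact ⟨h1, h⟩
        · rintro (rfl | ⟨h1, h2⟩)
          · exact ⟨hj.1, by omega⟩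
          · exact ⟨h1, by omega⟩
      rw [hins, Finset.card_insert_of_notMem (by simp)] at hsplit
      omega
    rw [TJ_card hne hj.1 hmj,
      ih ((s.filter (fun x => m < x ∧ x < j)).card) (by omega) _ rfl,
      ih ((s.filter (fun x => j < x)).card) (by omega) _ rfl, hBtcard]
    congr 2
    omega
  rw [Finset.sum_congr rfl hsum,
    sum_rank hne (fun r => catalan r * catalan (N - r))]
  rw [hsN]
  have hN1 : N - 1 + 1 = N := by omega
  rw [hN1, catalan_split hN]

end NC12Aux
namespace NC12Aux
open Finset


/-- The embedding `Fin m ↪ ℕ`. -/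
def vEmb (m : ℕ) : Fin m ↪ ℕ := ⟨Fin.val, Fin.val_injective⟩

/-- Push a configuration on `Fin m` to one on `range m ⊆ ℕ`. -/
noncomputable def push (m : ℕ) (F : Finset (Finset (Fin m))) : Finset (Finset ℕ) :=
  F.image (fun a => a.map (vEmb m))

lemma map_pair {m : ℕ} (i1 i2 : Fin m) :
    ({i1, i2} : Finset (Fin m)).map (vEmb m) = {(i1 : ℕ), (i2 : ℕ)} := by
  ext x
  simp [vEmb, Finset.mem_map]

lemma push_mem_iff {m : ℕ} {F : Finset (Finset (Fin m))} {b : Finset ℕ} :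
    b ∈ push m F ↔ ∃ a ∈ F, a.map (vEmb m) = b := by
  simp [push]

lemma bridge_iff {m : ℕ} (F : Finset (Finset (Fin m))) :
    IsNC12Config m F ↔ push m F ∈ NCF (Finset.range m) := by
  have hmapinj : Function.Injective (fun a : Finset (Fin m) => a.map (vEmb m)) :=
    fun a b h => Finset.map_injective _ h
  constructor
  · rintro ⟨hcard, hdisj, hcross⟩
    rw [mem_NCF]
    refine ⟨?_, ?_, ?_, ?_⟩
    · intro b hb
      obtain ⟨a, _, rfl⟩ := push_mem_iff.mp hb
      intro x hx
      rw [Finset.mem_map] at hx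
      obtain ⟨i, _, rfl⟩ := hx
      simp [vEmb]
    · intro b hb
      obtain ⟨a, ha, rfl⟩ := push_mem_iff.mp hb
      rw [Finset.card_map]
      exact hcard a ha
    · intro b hb c hc hbc
      obtain ⟨a, ha, rfl⟩ := push_mem_iff.mp hb
      obtain ⟨a', ha', rfl⟩ := push_mem_iff.mp hc
      have : a ≠ a' := fun h => hbc (by rw [h])
      rw [Finset.disjoint_map]
      exact hdisj a ha a' ha' this
    · rintro ⟨i1, i2, j1, j2, h1, h2, hlt1, hlt2, hlt3⟩
      obtain ⟨a, ha, hae⟩ := push_mem_iff.mp h1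
      obtain ⟨a', ha', hae'⟩ := push_mem_iff.mp h2
      have hi1 : i1 < m := by
        have : i1 ∈ a.map (vEmb m) := by rw [hae]; simp
        rw [Finset.mem_map] at this
        obtain ⟨i, _, rfl⟩ := this
        exact i.isLt
      have hi2 : i2 < m := by
        have : i2 ∈ a.map (vEmb m) := by rw [hae]; simp
        rw [Finset.mem_map] at this
        obtain ⟨i, _, rfl⟩ := this
        exact i.isLt
      have hj1 : j1 < m := by
        have : j1 ∈ a'.map (vEmb m) := by rw [hae']; simp
        rw [Finset.mem_map] at this
        obtain ⟨i, _, rfl⟩ := this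
        exact i.isLt
      have hj2 : j2 < m := by
        have : j2 ∈ a'.map (vEmb m) := by rw [hae']; simp
        rw [Finset.mem_map] at this
        obtain ⟨i, _, rfl⟩ := this
        exact i.isLt
      have ha_eq : a = ({⟨i1, hi1⟩, ⟨i2, hi2⟩} : Finset (Fin m)) := by
        apply hmapinj
        simp only []
        rw [hae, map_pair]
      have ha'_eq : a' = ({⟨j1, hj1⟩, ⟨j2, hj2⟩} : Finset (Fin m)) := by
        apply hmapinj
        simp only []
        rw [hae', map_pair]
      exact hcross ⟨⟨i1, hi1⟩, ⟨i2, hi2⟩, ⟨j1, hj1⟩, ⟨j2, hj2⟩,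
        ha_eq ▸ ha, ha'_eq ▸ ha', hlt1, hlt2, hlt3⟩
  · intro hp
    obtain ⟨hsub, hcard, hdisj, hcross⟩ := mem_NCF.mp hp
    refine ⟨?_, ?_, ?_⟩
    · intro a ha
      have := hcard _ (push_mem_iff.mpr ⟨a, ha, rfl⟩)
      rwa [Finset.card_map] at this
    · intro a ha b hb hab
      have hne : a.map (vEmb m) ≠ b.map (vEmb m) := fun h => hab (hmapinj h)
      have := hdisj _ (push_mem_iff.mpr ⟨a, ha, rfl⟩) _ (push_mem_iff.mpr ⟨b, hb, rfl⟩) hne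
      rwa [Finset.disjoint_map] at this
    · rintro ⟨i1, i2, j1, j2, h1, h2, hlt1, hlt2, hlt3⟩
      refine hcross ⟨i1, i2, j1, j2, ?_, ?_, hlt1, hlt2, hlt3⟩
      · rw [← map_pair i1 i2]
        exact push_mem_iff.mpr ⟨_, h1, rfl⟩
      · rw [← map_pair j1 j2]
        exact push_mem_iff.mpr ⟨_, h2, rfl⟩

/-- Pull back a subset of `range m` to `Fin m`. -/
def pull (m : ℕ) (b : Finset ℕ) : Finset (Fin m) :=
  Finset.univ.filter (fun i : Fin m => (i : ℕ) ∈ b)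

lemma map_pull {m : ℕ} {b : Finset ℕ} (hb : b ⊆ Finset.range m) :
    (pull m b).map (vEmb m) = b := by
  ext x
  simp only [pull, Finset.mem_map, Finset.mem_filter, Finset.mem_univ, true_and]
  constructor
  · rintro ⟨i, hi, rfl⟩
    exact hi
  · intro hx
    have : x < m := Finset.mem_range.mp (hb hx)
    exact ⟨⟨x, this⟩, hx, rfl⟩

lemma push_bijective (m : ℕ) :
    Function.Bijective (fun F : {F : Finset (Finset (Fin m)) // IsNC12Config m F} =>
      (⟨push m F.1, (bridge_iff F.1).mp F.2⟩ : {G : Finset (Finset ℕ) // G ∈ NCF (Finset.range m)})) := by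
  constructor
  · rintro ⟨F, hF⟩ ⟨F', hF'⟩ h
    simp only [Subtype.mk.injEq] at h ⊢
    have hinj : Function.Injective (push m) := by
      apply Finset.image_injective
      exact fun a b hab => Finset.map_injective _ hab
    exact hinj h
  · rintro ⟨G, hG⟩
    have hsub := (mem_NCF.mp hG).1
    refine ⟨⟨G.image (pull m), ?_⟩, ?_⟩
    · rw [bridge_iff]
      have : push m (G.image (pull m)) = G := by
        rw [push, Finset.image_image]
        have : ∀ b ∈ G, ((pull m b).map (vEmb m)) = b := fun b hb => map_pull (hsub b hb)
        calc G.image (fun b => (pull m b).map (vEmb m)) = G.image id := Finset.image_congr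
              (fun b hb => this b hb)
        _ = G := Finset.image_id
      rwa [this]
    · simp only [Subtype.mk.injEq]
      rw [push, Finset.image_image]
      calc G.image (fun b => (pull m b).map (vEmb m)) = G.image id := Finset.image_congr
            (fun b hb => map_pull (hsub b hb))
      _ = G := Finset.image_id

end NC12Aux


lemma NC12Aux.catalan_mul (n : ℕ) : catalan n * (2 * n + 1) = Nat.choose (2 * n + 1) n := by
  apply Nat.eq_of_mul_eq_mul_left (show 0 < n + 1 by omega)
  have h1 : (n + 1) * catalan n = Nat.centralBinom n := succ_mul_catalan_eq_centralBinom n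
  have h2 := Nat.add_one_mul_choose_eq (2 * n) n
  have h3 : (2 * n + 1).choose (n + 1) = (2 * n + 1).choose n := by
    have := Nat.choose_symm (show n + 1 ≤ 2 * n + 1 by omega)
    rw [show 2 * n + 1 - (n + 1) = n by omega] at this
    exact this.symm
  have h4 : Nat.centralBinom n = (2 * n).choose n := Nat.centralBinom_eq_two_mul_choose n
  calc (n + 1) * (catalan n * (2 * n + 1)) = ((n + 1) * catalan n) * (2 * n + 1) := by ring
  _ = (2 * n).choose n * (2 * n + 1) := by rw [h1, h4]
  _ = (2 * n + 1) * (2 * n).choose n := by ring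
  _ = (2 * n + 1).choose (n + 1) * (n + 1) := by simpa [Nat.succ_eq_add_one] using h2
  _ = (n + 1) * ((2 * n + 1).choose n) := by rw [h3]; ring

/-- There is a bijection between `(n+1, n)`-Dyck paths and noncrossing
`(1,2)`-configurations on `[n-1]`; hence the number of such configurations
equals `Cat(n+1, n) = (1/(2n+1)) * binomial (2n+1) n`. -/
theorem dyck_equiv_nc12 (n : ℕ) (hn : 0 < n) :
    Nonempty ({t : Fin n → ℕ // IsDyckSeq n t} ≃
        {F : Finset (Finset (Fin (n - 1))) // IsNC12Config (n - 1) F}) ∧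
      Set.ncard {F : Finset (Finset (Fin (n - 1))) | IsNC12Config (n - 1) F} * (2 * n + 1) =
        Nat.choose (2 * n + 1) n := by
  obtain ⟨k, rfl⟩ : ∃ k, n = k + 1 := ⟨n - 1, by omega⟩
  have hNCF : (NC12Aux.NCF (Finset.range k)).card = catalan (k + 1) :=
    NC12Aux.NCF_card_cat k _ (Finset.card_range k)
  have hbij := NC12Aux.push_bijective k
  have hcardC : Nat.card {F : Finset (Finset (Fin k)) // IsNC12Config k F} = catalan (k + 1) := by
    rw [Nat.card_eq_of_bijective _ hbij, Nat.card_eq_finsetCard]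
    exact hNCF
  constructor
  · have e1 := NC12Aux.dyckSeqEquiv k
    have hft : Fintype {F : Finset (Finset (Fin k)) // IsNC12Config k F} := Fintype.ofFinite _
    have e2cards : Fintype.card {F : Finset (Finset (Fin k)) // IsNC12Config k F}
        = Fintype.card {p : DyckWord // p.semilength = k + 1} := by
      rw [DyckWord.card_dyckWord_semilength_eq_catalan, ← Nat.card_eq_fintype_card, hcardC]
    obtain ⟨e2⟩ := Fintype.card_eq.mp e2cards
    exact ⟨e1.trans e2.symm⟩
  · have hset : {F : Finset (Finset (Fin k)) | IsNC12Config k F}.ncard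
        = Nat.card {F : Finset (Finset (Fin k)) // IsNC12Config k F} := by
      rw [← Nat.card_coe_set_eq]
      exact Nat.card_congr (Equiv.subtypeEquivRight (fun _ => Iff.rfl))
    rw [show k + 1 - 1 = k from rfl, hset, hcardC]
    exact NC12Aux.catalan_mul (k + 1)
end
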